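/- arXiv:2506.22307 — 9 statements merged into one kernel-verified Lean document; each statement's English description precedes it below -/
import Mathlib

section
/- If a finite simple graph G is prime, then any two edges of G lie in the same edge class of G. -/
/-- A module (homogeneous set) of a simple graph: every vertex outside `M` is adjacent
to every vertex of `M` or to no vertex of `M`. -/
def SimpleGraph.IsModuleSet {V : Type*} (G : SimpleGraph V) (M : Set V) : Prop :=
  ∀ v ∉ M, (∀ u ∈ M, G.Adj v u) ∨ (∀ u ∈ M, ¬ G.Adj v u)

/-- A graph is prime if all of its modules are trivial (size at most one, or all vertices). -/
def SimpleGraph.IsPrimeGraph {V : Type*} (G : SimpleGraph V) : Prop :=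
  ∀ M : Set V, G.IsModuleSet M → M.ncard ≤ 1 ∨ M = Set.univ

/-- The basic step of Gallai's relation `∧` on edges: `ab ∧ bc` whenever `ab` and `bc`
are edges sharing the endpoint `b` and `ac` is not an edge. -/
def SimpleGraph.EdgeStep {V : Type*} (G : SimpleGraph V) (e f : Sym2 V) : Prop :=
  ∃ a b c, G.Adj a b ∧ G.Adj b c ∧ ¬ G.Adj a c ∧ e = s(a, b) ∧ f = s(b, c)

/-- Two edges lie in the same edge class iff they are joined by a finite sequence of
edges in which consecutive edges are related by `∧` (transitive closure, with reflexivity). -/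
def SimpleGraph.SameEdgeClass {V : Type*} (G : SimpleGraph V) (e f : Sym2 V) : Prop :=
  Relation.ReflTransGen G.EdgeStep e f

/-!
Let `K` be the edge class of an edge `e`. If a vertex `v` is adjacent to both ends of an edge
`f ∈ K` through edges outside `K`, then the same holds for every edge of `K`: along a step
`xy ∧ yz` of `K`, the vertex `v` must see `z` (else `vy ∧ yz` would put `vy` in `K`), and `vz ∉ K`
(else `xv ∧ vz` would put `vx` in `K`). A vertex outside the support of `K` that sees one end of
an edge of `K` sees both ends, hence all of the support, so the support of `K` is a module; it
has two vertices, hence in a prime graph it is everything. In a triangle `abc` whose edges `ab`,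
`ac` both lie outside the class of `bc`, the vertex `a` would therefore be adjacent to itself, so
two edges of a triangle always share a class. Consequently any two edges at a common vertex share
a class, and since every class meets every vertex, there is only one class.
-/

namespace SimpleGraph

variable {V : Type*} (G : SimpleGraph V)

def edgeClassSupport (e : Sym2 V) : Set V :=
  {v | ∃ f, G.SameEdgeClass e f ∧ v ∈ f}

def JoinedOutsideClass (e : Sym2 V) (v : V) (f : Sym2 V) : Prop :=
  ∀ w ∈ f, G.Adj v w ∧ ¬ G.SameEdgeClass e s(v, w)

variable {G}

lemma EdgeStep.symm {e f : Sym2 V} (h : G.EdgeStep e f) : G.EdgeStep f e := by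
  obtain ⟨a, b, c, hab, hbc, hac, rfl, rfl⟩ := h
  exact ⟨c, b, a, hbc.symm, hab.symm, fun h' => hac h'.symm, Sym2.eq_swap, Sym2.eq_swap⟩

lemma SameEdgeClass.symm {e f : Sym2 V} (h : G.SameEdgeClass e f) : G.SameEdgeClass f e := by
  induction h with
  | refl => exact .refl
  | tail _ hstep ih => exact .head hstep.symm ih

lemma SameEdgeClass.mem_edgeSet {e f : Sym2 V} (he : e ∈ G.edgeSet)
    (h : G.SameEdgeClass e f) : f ∈ G.edgeSet := by
  induction h with
  | refl => exact he
  | tail _ hstep _ =>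
    obtain ⟨a, b, c, -, hbc, -, -, rfl⟩ := hstep
    exact hbc

lemma sameEdgeClass_of_adj_of_not_adj {a b c : V} (hab : G.Adj a b) (hbc : G.Adj b c)
    (hac : ¬ G.Adj a c) : G.SameEdgeClass s(a, b) s(b, c) :=
  .single ⟨a, b, c, hab, hbc, hac, rfl, rfl⟩

lemma adj_of_sameEdgeClass_of_adj {e : Sym2 V} {x y v : V} (hxy : G.Adj x y)
    (hK : G.SameEdgeClass e s(x, y)) (hvx : G.Adj v x) (hvK : ¬ G.SameEdgeClass e s(v, x)) :
    G.Adj v y := by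
  by_contra hvy
  refine hvK (Sym2.eq_swap ▸ hK.trans ?_)
  exact Sym2.eq_swap (a := y) ▸ sameEdgeClass_of_adj_of_not_adj hxy.symm hvx.symm
    (fun h => hvy h.symm)

lemma JoinedOutsideClass.of_sameEdgeClass {e f g : Sym2 V} {v : V}
    (hef : G.SameEdgeClass e f) (hfg : G.SameEdgeClass f g) (hv : G.JoinedOutsideClass e v f) :
    G.JoinedOutsideClass e v g := by
  induction hfg with
  | refl => exact hv
  | @tail f g hfg hstep ih =>
    obtain ⟨x, y, z, hxy, hyz, hxz, rfl, rfl⟩ := hstep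
    have hK : G.SameEdgeClass e s(y, z) :=
      (hef.trans hfg).tail ⟨x, y, z, hxy, hyz, hxz, rfl, rfl⟩
    obtain ⟨hvx, hvxK⟩ := ih x (Sym2.mem_mk_left x y)
    obtain ⟨hvy, hvyK⟩ := ih y (Sym2.mem_mk_right x y)
    have hvz : G.Adj v z := adj_of_sameEdgeClass_of_adj hyz hK hvy hvyK
    have hvzK : ¬ G.SameEdgeClass e s(v, z) := fun h =>
      hvxK (Sym2.eq_swap ▸ h.trans (sameEdgeClass_of_adj_of_not_adj hvx.symm hvz hxz).symm)
    intro w hw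
    rcases Sym2.mem_iff.1 hw with rfl | rfl
    exacts [⟨hvy, hvyK⟩, ⟨hvz, hvzK⟩]

lemma not_sameEdgeClass_of_notMem_edgeClassSupport {e : Sym2 V} {v : V}
    (hv : v ∉ G.edgeClassSupport e) (w : V) : ¬ G.SameEdgeClass e s(v, w) :=
  fun h => hv ⟨_, h, Sym2.mem_mk_left v w⟩

lemma isModuleSet_edgeClassSupport {e : Sym2 V} (he : e ∈ G.edgeSet) :
    G.IsModuleSet (G.edgeClassSupport e) := by
  intro v hv
  have hvK := not_sameEdgeClass_of_notMem_edgeClassSupport hv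
  by_cases hve : ∀ w ∈ e, G.Adj v w
  · left
    rintro u ⟨f, hef, huf⟩
    exact (JoinedOutsideClass.of_sameEdgeClass .refl hef (fun w hw => ⟨hve w hw, hvK w⟩) u huf).1
  · right
    rintro u ⟨f, hef, huf⟩ hvu
    obtain ⟨u', rfl⟩ := Sym2.mem_iff_exists.1 huf
    have huu' : G.Adj u u' := hef.mem_edgeSet he
    have hvu' := adj_of_sameEdgeClass_of_adj huu' hef hvu (hvK u)
    have hv : G.JoinedOutsideClass e v s(u, u') := by
      intro w hw
      rcases Sym2.mem_iff.1 hw with rfl | rfl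
      exacts [⟨hvu, hvK _⟩, ⟨hvu', hvK _⟩]
    exact hve fun w hw => (hv.of_sameEdgeClass hef hef.symm w hw).1

lemma IsPrimeGraph.edgeClassSupport_eq_univ [Finite V] (hG : G.IsPrimeGraph) {e : Sym2 V}
    (he : e ∈ G.edgeSet) : G.edgeClassSupport e = Set.univ := by
  refine (hG _ (isModuleSet_edgeClassSupport he)).resolve_left fun hle => ?_
  induction e using Sym2.ind with | _ a b =>
  have : 1 < (G.edgeClassSupport s(a, b)).ncard :=
    (Set.one_lt_ncard_iff (Set.toFinite _)).2 ⟨a, b, ⟨_, .refl, Sym2.mem_mk_left a b⟩,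
      ⟨_, .refl, Sym2.mem_mk_right a b⟩, G.ne_of_adj he⟩
  omega

lemma IsPrimeGraph.mem_edgeClassSupport [Finite V] (hG : G.IsPrimeGraph) {e : Sym2 V}
    (he : e ∈ G.edgeSet) (v : V) : v ∈ G.edgeClassSupport e := by
  simp [hG.edgeClassSupport_eq_univ he]

lemma IsPrimeGraph.sameEdgeClass_of_triangle [Finite V] (hG : G.IsPrimeGraph) {a b c : V}
    (hab : G.Adj a b) (hbc : G.Adj b c) (hac : G.Adj a c) :
    G.SameEdgeClass s(b, c) s(a, b) ∨ G.SameEdgeClass s(b, c) s(a, c) := by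
  by_contra! h
  have ha : G.JoinedOutsideClass s(b, c) a s(b, c) := by
    intro w hw
    rcases Sym2.mem_iff.1 hw with rfl | rfl
    exacts [⟨hab, h.1⟩, ⟨hac, h.2⟩]
  obtain ⟨f, hf, haf⟩ := hG.mem_edgeClassSupport (G.mem_edgeSet.2 hbc) a
  exact G.irrefl (ha.of_sameEdgeClass .refl hf a haf).1

lemma IsPrimeGraph.sameEdgeClass_of_adj_of_adj [Finite V] (hG : G.IsPrimeGraph) {u v w : V}
    (huv : G.Adj u v) (huw : G.Adj u w) : G.SameEdgeClass s(u, v) s(u, w) := by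
  by_cases hvw : G.Adj v w
  · rcases hG.sameEdgeClass_of_triangle huw.symm huv hvw.symm with h | h
    · exact Sym2.eq_swap (a := w) ▸ h
    rcases hG.sameEdgeClass_of_triangle huv.symm huw hvw with h' | h'
    · exact Sym2.eq_swap (a := v) ▸ h'.symm
    · exact h.trans (by rw [Sym2.eq_swap (a := w)]; exact h'.symm)
  · exact Sym2.eq_swap (a := v) ▸ sameEdgeClass_of_adj_of_not_adj huv.symm huw hvw

end SimpleGraph

theorem prime_graph_one_edge_class {V : Type*} [Fintype V] (G : SimpleGraph V)
    (hG : G.IsPrimeGraph) :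
    ∀ e ∈ G.edgeSet, ∀ f ∈ G.edgeSet, G.SameEdgeClass e f := by
  intro e he f hf
  induction f using Sym2.ind with | _ c d =>
  obtain ⟨g, heg, hcg⟩ := hG.mem_edgeClassSupport he c
  obtain ⟨x, rfl⟩ := Sym2.mem_iff_exists.1 hcg
  exact heg.trans (hG.sameEdgeClass_of_adj_of_adj (heg.mem_edgeSet he) hf)
end

section
/- A finite simple graph G is prime if and only if for every pair of distinct vertices u, v of G and every vertex w different from u and v, there exists a chain p₁, p₂, …, p_m in G with p₁ = u, p₂ = v and p_m = w. -/
/-- A chain in a simple graph: a sequence of distinct vertices (here `0`-indexed) such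
that each vertex `p i` with `i ≥ 2` is either adjacent to its predecessor and to none of
the earlier vertices, or non-adjacent to its predecessor and adjacent to all earlier ones. -/
def SimpleGraph.IsChainSeq {V : Type*} (G : SimpleGraph V) {m : ℕ} (p : Fin m → V) : Prop :=
  Function.Injective p ∧
  ∀ i : Fin m, 2 ≤ (i : ℕ) →
    (G.Adj (p i) (p ⟨(i : ℕ) - 1, by have := i.isLt; omega⟩) ∧
      ∀ j : Fin m, (j : ℕ) < (i : ℕ) - 1 → ¬ G.Adj (p i) (p j)) ∨
    (¬ G.Adj (p i) (p ⟨(i : ℕ) - 1, by have := i.isLt; omega⟩) ∧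
      ∀ j : Fin m, (j : ℕ) < (i : ℕ) - 1 → G.Adj (p i) (p j))

lemma chain_trunc {V : Type*} (G : SimpleGraph V) {m k : ℕ} (hk : k ≤ m)
    (p : Fin (m + 2) → V) (hp : G.IsChainSeq p) :
    G.IsChainSeq (fun j : Fin (k + 2) => p ⟨(j : ℕ), by omega⟩) := by
  constructor
  · intro a b hab
    have h2 := hp.1 hab
    simp only [Fin.mk.injEq] at h2
    exact Fin.ext h2
  · intro i hi
    rcases hp.2 ⟨(i : ℕ), by omega⟩ hi with ⟨h1, h2⟩ | ⟨h1, h2⟩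
    · left
      exact ⟨h1, fun j hj => h2 ⟨(j : ℕ), by omega⟩ hj⟩
    · right
      exact ⟨h1, fun j hj => h2 ⟨(j : ℕ), by omega⟩ hj⟩

lemma chain_extend {V : Type*} (G : SimpleGraph V) {m k : ℕ} (hk : k ≤ m)
    (p : Fin (m + 2) → V) (hp : G.IsChainSeq p)
    (z : V) (hz : ∀ j : Fin (m + 2), (j : ℕ) < k + 2 → p j ≠ z)
    (hcond : (G.Adj z (p ⟨k + 1, by omega⟩) ∧ ∀ j : Fin (m + 2), (j : ℕ) < k + 1 → ¬ G.Adj z (p j)) ∨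
             (¬ G.Adj z (p ⟨k + 1, by omega⟩) ∧ ∀ j : Fin (m + 2), (j : ℕ) < k + 1 → G.Adj z (p j))) :
    G.IsChainSeq (fun j : Fin (k + 3) => if h : (j : ℕ) < k + 2 then p ⟨(j : ℕ), by omega⟩ else z) := by
  constructor
  · intro a b hab
    dsimp only at hab
    by_cases ha : (a : ℕ) < k + 2 <;> by_cases hb : (b : ℕ) < k + 2
    · rw [dif_pos ha, dif_pos hb] at hab
      have h2 := hp.1 hab
      simp only [Fin.mk.injEq] at h2
      exact Fin.ext h2
    · rw [dif_pos ha, dif_neg hb] at hab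
      exact absurd hab (hz _ ha)
    · rw [dif_neg ha, dif_pos hb] at hab
      exact absurd hab.symm (hz _ hb)
    · exact Fin.ext (by omega)
  · intro i hi
    dsimp only
    by_cases hik : (i : ℕ) < k + 2
    · rw [dif_pos hik]
      have e1 : (if h : (i : ℕ) - 1 < k + 2 then p ⟨(i : ℕ) - 1, by omega⟩ else z)
          = p ⟨(i : ℕ) - 1, by omega⟩ := dif_pos (by omega)
      rcases hp.2 ⟨(i : ℕ), by omega⟩ hi with ⟨h1, h2⟩ | ⟨h1, h2⟩
      · left
        refine ⟨by simpa [e1] using h1, ?_⟩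
        intro j hj
        rw [dif_pos (by omega : (j : ℕ) < k + 2)]
        exact h2 ⟨(j : ℕ), by omega⟩ hj
      · right
        refine ⟨by simpa [e1] using h1, ?_⟩
        intro j hj
        rw [dif_pos (by omega : (j : ℕ) < k + 2)]
        exact h2 ⟨(j : ℕ), by omega⟩ hj
    · have hik' : (i : ℕ) = k + 2 := by have := i.isLt; omega
      rw [dif_neg hik]
      have e1 : (if h : (i : ℕ) - 1 < k + 2 then p ⟨(i : ℕ) - 1, by omega⟩ else z)
          = p ⟨k + 1, by omega⟩ := by
        rw [dif_pos (by omega : (i : ℕ) - 1 < k + 2)]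
        congr 1
        exact Fin.ext (show (i : ℕ) - 1 = k + 1 by omega)
      rcases hcond with ⟨h1, h2⟩ | ⟨h1, h2⟩
      · left
        refine ⟨by rwa [e1], ?_⟩
        intro j hj
        rw [dif_pos (by omega : (j : ℕ) < k + 2)]
        exact h2 ⟨(j : ℕ), by omega⟩ (show (j : ℕ) < k + 1 by omega)
      · right
        refine ⟨by rwa [e1], ?_⟩
        intro j hj
        rw [dif_pos (by omega : (j : ℕ) < k + 2)]
        exact h2 ⟨(j : ℕ), by omega⟩ (show (j : ℕ) < k + 1 by omega)

theorem prime_iff_chains {V : Type*} [Fintype V] (G : SimpleGraph V) :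
    G.IsPrimeGraph ↔
      ∀ u v w : V, u ≠ v → w ≠ u → w ≠ v →
        ∃ (m : ℕ) (p : Fin (m + 2) → V), G.IsChainSeq p ∧
          p 0 = u ∧ p 1 = v ∧ p (Fin.last (m + 1)) = w := by
  classical
  constructor
  · -- prime → chains
    intro hprime u v w huv hwu hwv
    set A : Set V := insert u {x | ∃ (m : ℕ) (p : Fin (m + 2) → V), G.IsChainSeq p ∧
      p 0 = u ∧ p 1 = v ∧ p (Fin.last (m + 1)) = x} with hAdef
    -- the trivial 2-chain u, v
    have hpair : G.IsChainSeq (fun j : Fin 2 => if (j : ℕ) = 0 then u else v) := by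
      constructor
      · intro a b hab
        dsimp only at hab
        by_cases ha : (a : ℕ) = 0 <;> by_cases hb : (b : ℕ) = 0
        · exact Fin.ext (by omega)
        · rw [if_pos ha, if_neg hb] at hab; exact absurd hab huv
        · rw [if_neg ha, if_pos hb] at hab; exact absurd hab.symm huv
        · exact Fin.ext (by have := a.isLt; have := b.isLt; omega)
      · intro i hi
        have := i.isLt; omega
    have huA : u ∈ A := Set.mem_insert _ _
    have hvA : v ∈ A := by
      refine Set.mem_insert_of_mem _ ⟨0, fun j : Fin 2 => if (j : ℕ) = 0 then u else v, hpair, ?_, ?_, ?_⟩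
      · simp
      · simp
      · simp [Fin.last]
    -- every vertex of a chain from u, v lies in A
    have mem_of_chain : ∀ (m : ℕ) (p : Fin (m + 2) → V), G.IsChainSeq p → p 0 = u → p 1 = v →
        ∀ i : Fin (m + 2), p i ∈ A := by
      intro m p hp h0 h1 i
      by_cases hi0 : (i : ℕ) = 0
      · have : i = 0 := Fin.ext (by simpa using hi0)
        rw [this, h0]; exact huA
      · have hk : (i : ℕ) - 1 ≤ m := by have := i.isLt; omega
        refine Set.mem_insert_of_mem _
          ⟨(i : ℕ) - 1, fun j : Fin ((i : ℕ) - 1 + 2) => p ⟨(j : ℕ), by omega⟩,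
            chain_trunc G hk p hp, ?_, ?_, ?_⟩
        · rw [← h0]; congr 1
        · rw [← h1]; congr 1
        · show p ⟨((Fin.last ((i : ℕ) - 1 + 1)) : ℕ), _⟩ = p i
          congr 1
          exact Fin.ext (by simp [Fin.last]; omega)
    -- a vertex outside A relates uniformly to u and v
    have mixed : ∀ z, z ∉ A → (G.Adj z u ↔ G.Adj z v) := by
      intro z hzA
      have hzu : z ≠ u := fun e => hzA (e ▸ huA)
      have hzv : z ≠ v := fun e => hzA (e ▸ hvA)
      have hzpair : ∀ j : Fin 2, (j : ℕ) < 0 + 2 →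
          (fun j : Fin 2 => if (j : ℕ) = 0 then u else v) j ≠ z := by
        intro j _
        dsimp only
        by_cases hj : (j : ℕ) = 0
        · rw [if_pos hj]; exact fun e => hzu e.symm
        · rw [if_neg hj]; exact fun e => hzv e.symm
      constructor
      all_goals {
        intro hadj
        by_contra hnadj
        apply hzA
        refine Set.mem_insert_of_mem _ ⟨1, _, chain_extend G (le_refl 0) _ hpair z hzpair ?_, ?_, ?_, ?_⟩
        · first
          | exact Or.inl ⟨by simpa using hadj, by
              intro j hj
              have hj0 : (j : ℕ) = 0 := by omega
              simpa [hj0] using hnadj⟩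
          | exact Or.inr ⟨by simpa using hnadj, by
              intro j hj
              have hj0 : (j : ℕ) = 0 := by omega
              simpa [hj0] using hadj⟩
        · simp
        · simp
        · simp [Fin.last]
      }
    -- key: a vertex outside A is uniform on every chain vertex
    have key : ∀ z, z ∉ A → ∀ (m : ℕ) (p : Fin (m + 2) → V), G.IsChainSeq p → p 0 = u → p 1 = v →
        ∀ n, ∀ hn : n < m + 2,
          (G.Adj z u → G.Adj z (p ⟨n, hn⟩)) ∧ (¬ G.Adj z u → ¬ G.Adj z (p ⟨n, hn⟩)) := by
      intro z hzA m p hp h0 h1 n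
      induction n using Nat.strong_induction_on with
      | _ n ih =>
        intro hn
        match n, hn with
        | 0, hn =>
          have e : (⟨0, hn⟩ : Fin (m + 2)) = 0 := Fin.ext (by simp)
          rw [e, h0]
          exact ⟨id, id⟩
        | 1, hn =>
          have e : (⟨1, hn⟩ : Fin (m + 2)) = 1 := Fin.ext (by simp)
          rw [e, h1]
          exact ⟨fun h => (mixed z hzA).mp h, fun h h' => h ((mixed z hzA).mpr h')⟩
        | (k + 2), hn =>
          have hne : ∀ j : Fin (m + 2), (j : ℕ) < (k + 1) + 2 → p j ≠ z :=
            fun j _ e => hzA (e ▸ mem_of_chain m p hp h0 h1 j)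
          have hk1 : k + 1 ≤ m := by omega
          constructor
          · intro hzu
            by_contra hnot
            apply hzA
            refine Set.mem_insert_of_mem _ ⟨k + 2, _,
              chain_extend G hk1 p hp z hne (Or.inr ⟨hnot, ?_⟩), ?_, ?_, ?_⟩
            · intro j hj
              have := (ih (j : ℕ) (by omega) j.isLt).1 hzu
              rwa [Fin.eta] at this
            · show (if h : ((0 : Fin (k + 1 + 3)) : ℕ) < k + 1 + 2 then p ⟨_, _⟩ else z) = u
              rw [dif_pos (by simp)]
              rw [← h0]; congr 1
            · show (if h : ((1 : Fin (k + 1 + 3)) : ℕ) < k + 1 + 2 then p ⟨_, _⟩ else z) = v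
              rw [dif_pos (by simp)]
              rw [← h1]; congr 1
            · show (if h : ((Fin.last (k + 1 + 2)) : ℕ) < k + 1 + 2 then p ⟨_, _⟩ else z) = z
              rw [dif_neg (by simp [Fin.last])]
          · intro hzu
            intro hadj
            apply hzA
            refine Set.mem_insert_of_mem _ ⟨k + 2, _,
              chain_extend G hk1 p hp z hne (Or.inl ⟨hadj, ?_⟩), ?_, ?_, ?_⟩
            · intro j hj
              have := (ih (j : ℕ) (by omega) j.isLt).2 hzu
              rwa [Fin.eta] at this
            · show (if h : ((0 : Fin (k + 1 + 3)) : ℕ) < k + 1 + 2 then p ⟨_, _⟩ else z) = u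
              rw [dif_pos (by simp)]
              rw [← h0]; congr 1
            · show (if h : ((1 : Fin (k + 1 + 3)) : ℕ) < k + 1 + 2 then p ⟨_, _⟩ else z) = v
              rw [dif_pos (by simp)]
              rw [← h1]; congr 1
            · show (if h : ((Fin.last (k + 1 + 2)) : ℕ) < k + 1 + 2 then p ⟨_, _⟩ else z) = z
              rw [dif_neg (by simp [Fin.last])]
    -- A is a module
    have hmod : G.IsModuleSet A := by
      intro z hz
      by_cases hzu : G.Adj z u
      · left
        intro a ha
        rcases Set.mem_insert_iff.mp ha with rfl | ⟨m, p, hp, h0, h1, hlast⟩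
        · exact hzu
        · have := (key z hz m p hp h0 h1 (m + 1) (by omega)).1 hzu
          have e : (⟨m + 1, by omega⟩ : Fin (m + 2)) = Fin.last (m + 1) := rfl
          rwa [e, hlast] at this
      · right
        intro a ha
        rcases Set.mem_insert_iff.mp ha with rfl | ⟨m, p, hp, h0, h1, hlast⟩
        · exact hzu
        · have := (key z hz m p hp h0 h1 (m + 1) (by omega)).2 hzu
          have e : (⟨m + 1, by omega⟩ : Fin (m + 2)) = Fin.last (m + 1) := rfl
          rwa [e, hlast] at this
    rcases hprime A hmod with hcard | huniv
    · exfalso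
      have : 1 < A.ncard := (Set.one_lt_ncard (Set.toFinite A)).mpr ⟨u, huA, v, hvA, huv⟩
      omega
    · have hwA : w ∈ A := huniv ▸ Set.mem_univ w
      rcases Set.mem_insert_iff.mp hwA with rfl | hw
      · exact absurd rfl hwu
      · exact hw
  · -- chains → prime
    intro hchain M hM
    by_contra hcon
    push_neg at hcon
    obtain ⟨hcard, hne⟩ := hcon
    have h1 : 1 < M.ncard := by omega
    obtain ⟨u, hu, v, hv, huv⟩ := (Set.one_lt_ncard (Set.toFinite M)).mp h1
    obtain ⟨w, hw⟩ : ∃ w, w ∉ M := by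
      by_contra h
      push_neg at h
      exact hne (Set.eq_univ_of_forall h)
    obtain ⟨m, p, hp, h0, h1', hlast⟩ :=
      hchain u v w huv (fun e => hw (e ▸ hu)) (fun e => hw (e ▸ hv))
    have all_in : ∀ n, ∀ hn : n < m + 2, p ⟨n, hn⟩ ∈ M := by
      intro n
      induction n using Nat.strong_induction_on with
      | _ n ih =>
        intro hn
        match n, hn with
        | 0, hn =>
          have e : (⟨0, hn⟩ : Fin (m + 2)) = 0 := Fin.ext (by simp)
          rw [e, h0]; exact hu
        | 1, hn =>
          have e : (⟨1, hn⟩ : Fin (m + 2)) = 1 := Fin.ext (by simp)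
          rw [e, h1']; exact hv
        | (k + 2), hn =>
          by_contra hnM
          have hpred : p ⟨k + 1, by omega⟩ ∈ M := ih (k + 1) (by omega) (by omega)
          have h0M : p 0 ∈ M := h0 ▸ hu
          rcases hp.2 ⟨k + 2, hn⟩ (by exact (by omega : 2 ≤ k + 2)) with ⟨hadj, hnon⟩ | ⟨hnadj, hadj'⟩
          · rcases hM _ hnM with hall | hnone
            · exact hnon 0 (by simp) (hall (p 0) h0M)
            · exact hnone _ hpred hadj
          · rcases hM _ hnM with hall | hnone
            · exact hnadj (hall _ hpred)
            · exact hnone (p 0) h0M (hadj' 0 (by simp))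
    have : p (Fin.last (m + 1)) ∈ M := all_in (m + 1) (by omega)
    exact hw (hlast ▸ this)
end

section
/- For any chain p₁, p₂, …, p_m in a finite simple graph G, either the induced subgraph G[p₁, …, p_m] is connected, or p₁ is non-adjacent to p₂ and G[p₁, …, p_m] is isomorphic to the disjoint union of a single isolated vertex and a path on m − 1 vertices. -/
lemma Fin.swap_zero_one_apply_of_two_le {n : ℕ} {k : Fin (n + 2)} (hk : 2 ≤ (k : ℕ)) :
    Equiv.swap 0 1 k = k :=
  Equiv.swap_apply_of_ne_of_ne (by rintro rfl; simp at hk) (by rintro rfl; simp at hk)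

namespace SimpleGraph

lemma ext_of_adj_iff_of_lt {α : Type*} [LinearOrder α] {G H : SimpleGraph α}
    (h : ∀ a b, a < b → (G.Adj a b ↔ H.Adj a b)) : G = H := by
  ext a b
  rcases lt_trichotomy a b with hab | rfl | hab
  · exact h a b hab
  · simp
  · rw [G.adj_comm, H.adj_comm]
    exact h b a hab

def botSumPathGraphIso (n : ℕ) :
    (⊥ : SimpleGraph (Fin 1)) ⊕g pathGraph n ≃g (pathGraph (n + 1)).deleteIncidenceSet 0 where
  toEquiv := finSumFinEquiv.trans (finCongr (Nat.add_comm 1 n))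
  map_rel_iff' {x y} := by
    rcases x with ⟨a, ha⟩ | ⟨a, ha⟩ <;> rcases y with ⟨b, hb⟩ | ⟨b, hb⟩ <;>
      simp [deleteIncidenceSet_adj, pathGraph_adj, Fin.ext_iff] <;> omega

variable {α V : Type*} {G : SimpleGraph V}

noncomputable def comapIsoInduceRange {p : α → V} (hp : p.Injective) :
    G.comap p ≃g G.induce (Set.range p) :=
  (Embedding.comap ⟨p, hp⟩ G).isoInduceRange

section

variable {m : ℕ} {p : Fin m → V}

lemma isChainSeq_iff : G.IsChainSeq p ↔ p.Injective ∧
    ∀ i j : Fin m, (j : ℕ) + 1 < i →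
      (G.Adj (p i) (p j) ↔ ¬ G.Adj (p i) (p ⟨(i : ℕ) - 1, by omega⟩)) := by
  refine and_congr_right fun _ => ⟨fun h i j hji => ?_, fun h i hi => ?_⟩
  · rcases h i (by omega) with ⟨hpred, hearlier⟩ | ⟨hpred, hearlier⟩
    · exact iff_of_false (hearlier j (by omega)) (not_not_intro hpred)
    · exact iff_of_true (hearlier j (by omega)) hpred
  · by_cases hpred : G.Adj (p i) (p ⟨(i : ℕ) - 1, by omega⟩)
    · exact .inl ⟨hpred, fun j hj hadj => (h i j (by omega)).1 hadj hpred⟩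
    · exact .inr ⟨hpred, fun j hj => (h i j (by omega)).2 hpred⟩

lemma IsChainSeq.adj_iff_not_adj_pred (hp : G.IsChainSeq p) {i j : Fin m}
    (hji : (j : ℕ) + 1 < i) :
    G.Adj (p i) (p j) ↔ ¬ G.Adj (p i) (p ⟨(i : ℕ) - 1, by omega⟩) :=
  (isChainSeq_iff.1 hp).2 i j hji

end

namespace IsChainSeq

variable {n : ℕ} {p : Fin (n + 2) → V}

lemma reachable_zero_or_reachable_one (hp : G.IsChainSeq p) (k : Fin (n + 2)) :
    (G.comap p).Reachable 0 k ∨ (G.comap p).Reachable 1 k := by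
  obtain ⟨k, hk⟩ := k
  induction k using Nat.strong_induction_on with
  | _ k ih =>
  match k, hk, ih with
  | 0, _, _ => exact .inl .rfl
  | 1, _, _ => exact .inr .rfl
  | k + 2, hk, ih =>
    by_cases hpred : G.Adj (p ⟨k + 2, hk⟩) (p ⟨k + 1, by omega⟩)
    · exact (ih (k + 1) (by omega) (by omega)).imp (·.trans (Adj.reachable hpred.symm))
          (·.trans (Adj.reachable hpred.symm))
    · have hzero : G.Adj (p ⟨k + 2, hk⟩) (p 0) :=
        (hp.adj_iff_not_adj_pred (i := ⟨k + 2, hk⟩) (j := 0) (by simp)).2 hpred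
      exact .inl (Adj.reachable hzero.symm)

lemma connected_comap (hp : G.IsChainSeq p) (h01 : (G.comap p).Reachable 0 1) :
    (G.comap p).Connected :=
  (connected_iff_exists_forall_reachable _).2
    ⟨0, fun k => (hp.reachable_zero_or_reachable_one k).elim id h01.trans⟩

lemma reachable_zero_one_of_not_adj_pred (hp : G.IsChainSeq p) {i : Fin (n + 2)}
    (hi : 3 ≤ (i : ℕ)) (hpred : ¬ G.Adj (p i) (p ⟨(i : ℕ) - 1, by omega⟩)) :
    (G.comap p).Reachable 0 1 := by
  have h0 := (hp.adj_iff_not_adj_pred (j := 0) (by simp; omega)).2 hpred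
  have h1 := (hp.adj_iff_not_adj_pred (j := 1) (by simp; omega)).2 hpred
  exact (Adj.reachable (G := G.comap p) h0.symm).trans (Adj.reachable (G := G.comap p) h1)

lemma comap_eq_deleteIncidenceSet (hp : G.IsChainSeq p) (h01 : ¬ G.Adj (p 0) (p 1))
    (hpred : ∀ i : Fin (n + 2), 2 ≤ (i : ℕ) →
      G.Adj (p i) (p ⟨(i : ℕ) - 1, by omega⟩)) :
    G.comap p = (pathGraph (n + 2)).deleteIncidenceSet 0 := by
  refine ext_of_adj_iff_of_lt fun ⟨a, ha⟩ ⟨b, hb⟩ hab => ?_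
  rw [Fin.mk_lt_mk] at hab
  simp only [comap_adj, deleteIncidenceSet_adj, pathGraph_adj, ne_eq, Fin.ext_iff]
  obtain hb2 | hb2 := Nat.lt_or_ge b 2
  · obtain ⟨rfl, rfl⟩ : a = 0 ∧ b = 1 := by omega
    simpa using h01
  · obtain rfl | hlt := eq_or_lt_of_le (show a + 1 ≤ b by omega)
    · exact iff_of_true (hpred ⟨a + 1, hb⟩ hb2).symm (by simp; omega)
    · have hba := (hp.adj_iff_not_adj_pred (i := ⟨b, hb⟩) (j := ⟨a, ha⟩) hlt).not_left.2
        (hpred ⟨b, hb⟩ hb2)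
      exact iff_of_false (fun h => hba h.symm) (by simp; omega)

lemma nonempty_induce_iso_of_forall_two_le_adj_pred (hp : G.IsChainSeq p)
    (h01 : ¬ G.Adj (p 0) (p 1))
    (hpred : ∀ i : Fin (n + 2), 2 ≤ (i : ℕ) →
      G.Adj (p i) (p ⟨(i : ℕ) - 1, by omega⟩)) :
    Nonempty (G.induce (Set.range p) ≃g (⊥ : SimpleGraph (Fin 1)) ⊕g pathGraph (n + 1)) := by
  have e := comapIsoInduceRange (G := G) hp.1
  rw [hp.comap_eq_deleteIncidenceSet h01 hpred] at e
  exact ⟨e.symm.trans (botSumPathGraphIso _).symm⟩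

lemma comp_swap (hp : G.IsChainSeq p) : G.IsChainSeq (p ∘ Equiv.swap 0 1) := by
  refine isChainSeq_iff.2 ⟨hp.1.comp (Equiv.injective _), fun i j hji => ?_⟩
  simp only [Function.comp_apply, Fin.swap_zero_one_apply_of_two_le (k := i) (by omega)]
  obtain hi | hi := eq_or_lt_of_le (show 2 ≤ (i : ℕ) by omega)
  · obtain ⟨i, hi'⟩ := i
    obtain ⟨j, hj⟩ := j
    obtain ⟨rfl, rfl⟩ : i = 2 ∧ j = 0 := by simp at hi hji; omega
    change G.Adj (p ⟨2, hi'⟩) (p (Equiv.swap 0 1 0)) ↔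
      ¬ G.Adj (p ⟨2, hi'⟩) (p (Equiv.swap 0 1 1))
    rw [Equiv.swap_apply_left, Equiv.swap_apply_right]
    exact iff_not_comm.1 (hp.adj_iff_not_adj_pred (i := ⟨2, hi'⟩) (j := 0) (by simp))
  · rw [Fin.swap_zero_one_apply_of_two_le (k := ⟨(i : ℕ) - 1, _⟩) (by simp; omega)]
    have hσj : (Equiv.swap (0 : Fin (n + 2)) 1 j : ℕ) + 1 < i := by
      rw [Equiv.swap_apply_def]
      split_ifs <;> simp only [Fin.ext_iff, Fin.val_zero, Fin.val_one] at * <;> omega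
    exact hp.adj_iff_not_adj_pred hσj

lemma nonempty_induce_iso_of_forall_three_le_adj_pred (hp : G.IsChainSeq p)
    (h01 : ¬ G.Adj (p 0) (p 1))
    (hpred : ∀ i : Fin (n + 2), 3 ≤ (i : ℕ) →
      G.Adj (p i) (p ⟨(i : ℕ) - 1, by omega⟩)) :
    Nonempty (G.induce (Set.range p) ≃g (⊥ : SimpleGraph (Fin 1)) ⊕g pathGraph (n + 1)) := by
  by_cases h2 : ∀ i : Fin (n + 2), 2 ≤ (i : ℕ) →
      G.Adj (p i) (p ⟨(i : ℕ) - 1, by omega⟩)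
  · exact hp.nonempty_induce_iso_of_forall_two_le_adj_pred h01 h2
  -- Otherwise `p 2` is adjacent to `p 0` but not to `p 1`.
  push Not at h2
  obtain ⟨⟨i, hi⟩, hi2, hi1⟩ := h2
  obtain rfl : i = 2 := by
    by_contra h
    exact hi1 (hpred ⟨i, hi⟩ (by simp at hi2 ⊢; omega))
  have h20 : G.Adj (p ⟨2, hi⟩) (p 0) := (hp.adj_iff_not_adj_pred (by simp)).2 hi1
  rw [← EquivLike.range_comp p (Equiv.swap 0 1)]
  refine hp.comp_swap.nonempty_induce_iso_of_forall_two_le_adj_pred ?_ fun ⟨k, hk⟩ hk2 => ?_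
  · change ¬ G.Adj (p (Equiv.swap 0 1 0)) (p (Equiv.swap 0 1 1))
    rw [Equiv.swap_apply_left, Equiv.swap_apply_right]
    exact fun h => h01 h.symm
  · change G.Adj (p (Equiv.swap 0 1 ⟨k, hk⟩)) (p (Equiv.swap 0 1 ⟨k - 1, by omega⟩))
    rw [Fin.swap_zero_one_apply_of_two_le hk2]
    obtain rfl | hk3 := eq_or_lt_of_le hk2
    · change G.Adj _ (p (Equiv.swap 0 1 1))
      rwa [Equiv.swap_apply_right]
    · rw [Fin.swap_zero_one_apply_of_two_le (by simp at hk3 ⊢; omega)]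
      exact hpred ⟨k, hk⟩ hk3

end IsChainSeq

end SimpleGraph

theorem chain_induce_connected_or_isolated_plus_path {V : Type*}
    (G : SimpleGraph V) {m : ℕ} (hm : 2 ≤ m) (p : Fin m → V) (hp : G.IsChainSeq p) :
    (G.induce (Set.range p)).Connected ∨
      (¬ G.Adj (p ⟨0, by omega⟩) (p ⟨1, by omega⟩) ∧
        Nonempty ((G.induce (Set.range p)) ≃g
          ((⊥ : SimpleGraph (Fin 1)) ⊕g SimpleGraph.pathGraph (m - 1)))) := by
  obtain ⟨n, rfl⟩ : ∃ n, m = n + 2 := ⟨m - 2, by omega⟩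
  by_cases h01 : (G.comap p).Reachable 0 1
  · exact .inl ((SimpleGraph.comapIsoInduceRange hp.1).connected_iff.1 (hp.connected_comap h01))
  have hadj01 : ¬ G.Adj (p 0) (p 1) := fun h => h01 (show (G.comap p).Adj 0 1 from h).reachable
  have hpred : ∀ i : Fin (n + 2), 3 ≤ (i : ℕ) →
      G.Adj (p i) (p ⟨(i : ℕ) - 1, by omega⟩) :=
    fun i hi => by_contra fun h => h01 (hp.reachable_zero_one_of_not_adj_pred hi h)
  exact .inr ⟨hadj01, hp.nonempty_induce_iso_of_forall_three_le_adj_pred hadj01 hpred⟩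
end

section
/- A permutation π of {1,…,n} is a simple permutation if and only if its inversion graph G_π is a prime graph. -/
/-- The inversion graph of a permutation of `{0, …, n-1}`: `i` and `j` with `i < j`
are adjacent iff `π j < π i`. -/
def invGraph {n : ℕ} (π : Equiv.Perm (Fin n)) : SimpleGraph (Fin n) :=
  SimpleGraph.fromRel fun i j => i < j ∧ π j < π i

/-- An interval of a permutation: a set of consecutive indices whose image is also a set
of consecutive values. -/
def IsPermInterval {n : ℕ} (π : Equiv.Perm (Fin n)) (I : Set (Fin n)) : Prop :=
  (∀ ⦃a b c : Fin n⦄, a ∈ I → c ∈ I → a ≤ b → b ≤ c → b ∈ I) ∧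
  (∀ ⦃a b c : Fin n⦄, a ∈ (⇑π) '' I → c ∈ (⇑π) '' I → a ≤ b → b ≤ c → b ∈ (⇑π) '' I)

/-- A permutation is simple if all of its intervals are trivial. -/
def IsSimplePerm {n : ℕ} (π : Equiv.Perm (Fin n)) : Prop :=
  ∀ I : Set (Fin n), IsPermInterval π I → I.ncard ≤ 1 ∨ I = Set.univ

/-!
A vertex `v` outside a module `M` of `G_π` lies on the same side of two points `a, b ∈ M` in
position exactly when it does in value. So a point outside `M` lies between `a` and `b` in
position iff it does in value, and a module is an interval as soon as it is order-connected;
conversely an interval is a module because every outside point lies on one side of it in both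
orders.

For a maximal proper module `S` with at least two points, `S ∪ [[a, b]]` is again a module for
`a, b ∈ S`, so it is `S` or everything. Then either `S` is order-connected, hence a nontrivial
interval, or both `S` and `π '' S` are "filled up" by one of their hulls, which forces `Sᶜ` to be an
interval. If `Sᶜ` has two points it is a nontrivial interval; if `Sᶜ = {w}` with `w` strictly
inside `S`, then `w` is isolated or universal in `G_π`, and `Iic w` is a nontrivial interval.
-/

open Set

section LinearOrder

variable {α : Type*} [LinearOrder α] {a b u x : α}

theorem Set.mem_uIcc_iff_not_lt_iff_lt (hxa : x ≠ a) (hxb : x ≠ b) :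
    x ∈ uIcc a b ↔ ¬(x < a ↔ x < b) := by
  rw [mem_uIcc]
  grind

theorem Set.lt_iff_lt_of_notMem_uIcc (hx : x ∉ uIcc a b) : x < a ↔ x < b := by
  rw [mem_uIcc] at hx
  grind

theorem Set.lt_iff_lt_of_mem_uIcc (h : x < a ↔ x < b) (hu : u ∈ uIcc a b) : x < u ↔ x < a := by
  rw [mem_uIcc] at hu
  grind

theorem Set.ordConnected_or_ordConnected_compl {S : Set α}
    (h : ∀ a ∈ S, ∀ b ∈ S, uIcc a b ⊆ S ∨ S ∪ uIcc a b = univ) :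
    S.OrdConnected ∨ Sᶜ.OrdConnected := by
  rw [or_iff_not_imp_left, ordConnected_iff_uIcc_subset]
  intro hS
  simp only [not_forall] at hS
  obtain ⟨a, ha, b, hb, hab⟩ := hS
  have hfill := (h a ha b hb).resolve_left hab
  have hmin : ∀ c ∉ S, min a b ≤ c := fun c hc =>
    ((eq_univ_iff_forall.1 hfill c).resolve_left hc).1
  -- For `x ∈ S` above `c₁ ∉ S`, the hull `[[min a b, x]]` contains `c₁`, so it must fill up
  -- everything; but it misses every `c₂ ∉ S` above `x`.
  refine ⟨fun c₁ hc₁ c₂ hc₂ x ⟨hc₁x, hxc₂⟩ hxS => ?_⟩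
  have hmS : min a b ∈ S := min_rec' (· ∈ S) ha hb
  have hmx : min a b ≤ x := (hmin c₁ hc₁).trans hc₁x
  rcases h _ hmS x hxS with hsub | hfill'
  · exact hc₁ (hsub (uIcc_of_le hmx ▸ ⟨hmin c₁ hc₁, hc₁x⟩))
  · have := ((eq_univ_iff_forall.1 hfill' c₂).resolve_left hc₂)
    rw [uIcc_of_le hmx] at this
    exact hc₂ (le_antisymm this.2 hxc₂ ▸ hxS)

end LinearOrder

theorem SimpleGraph.isModuleSet_iff {V : Type*} {G : SimpleGraph V} {M : Set V} :
    G.IsModuleSet M ↔ ∀ v ∉ M, ∀ a ∈ M, ∀ b ∈ M, (G.Adj v a ↔ G.Adj v b) := by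
  refine ⟨fun hM v hv a ha b hb => ?_, fun h v hv => ?_⟩
  · rcases hM v hv with hadj | hadj
    · exact iff_of_true (hadj a ha) (hadj b hb)
    · exact iff_of_false (hadj a ha) (hadj b hb)
  · by_cases hadj : ∃ a ∈ M, G.Adj v a
    · obtain ⟨a, ha, hva⟩ := hadj
      exact Or.inl fun b hb => (h v hv a ha b hb).1 hva
    · exact Or.inr fun a ha hva => hadj ⟨a, ha, hva⟩

section invGraph

variable {n : ℕ} {π : Equiv.Perm (Fin n)}

theorem invGraph_adj_iff {v u : Fin n} :
    (invGraph π).Adj v u ↔ v ≠ u ∧ ¬(v < u ↔ π v < π u) := by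
  simp only [invGraph, SimpleGraph.fromRel_adj]
  have := π.injective.ne_iff (x := v) (y := u)
  grind

theorem isModuleSet_invGraph_iff {M : Set (Fin n)} :
    (invGraph π).IsModuleSet M ↔
      ∀ v ∉ M, ∀ a ∈ M, ∀ b ∈ M, ((v < a ↔ v < b) ↔ (π v < π a ↔ π v < π b)) := by
  rw [SimpleGraph.isModuleSet_iff]
  refine forall₂_congr fun v hv => forall₂_congr fun a ha => forall₂_congr fun b hb => ?_
  have hva : v ≠ a := fun h => hv (h ▸ ha)
  have hvb : v ≠ b := fun h => hv (h ▸ hb)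
  simp only [invGraph_adj_iff, hva, hvb, ne_eq, not_false_eq_true, true_and]
  tauto

theorem isPermInterval_iff {I : Set (Fin n)} :
    IsPermInterval π I ↔ I.OrdConnected ∧ (π '' I).OrdConnected := by
  simp only [IsPermInterval, ordConnected_def, subset_def, mem_Icc]
  grind

theorem IsPermInterval.isModuleSet {I : Set (Fin n)} (hI : IsPermInterval π I) :
    (invGraph π).IsModuleSet I := by
  obtain ⟨hconn, hconn'⟩ := isPermInterval_iff.1 hI
  refine isModuleSet_invGraph_iff.2 fun v hv a ha b hb => iff_of_true ?_ ?_
  · exact lt_iff_lt_of_notMem_uIcc fun h => hv (hconn.uIcc_subset ha hb h)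
  · refine lt_iff_lt_of_notMem_uIcc fun h => hv ?_
    obtain ⟨u, hu, huv⟩ := hconn'.uIcc_subset (mem_image_of_mem π ha) (mem_image_of_mem π hb) h
    exact π.injective huv ▸ hu

namespace SimpleGraph.IsModuleSet

variable {M : Set (Fin n)} {a b : Fin n}

theorem mem_uIcc_iff_apply_mem_uIcc (hM : (invGraph π).IsModuleSet M) {u : Fin n} (hu : u ∉ M)
    (ha : a ∈ M) (hb : b ∈ M) : u ∈ uIcc a b ↔ π u ∈ uIcc (π a) (π b) := by
  have hua : u ≠ a := fun h => hu (h ▸ ha)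
  have hub : u ≠ b := fun h => hu (h ▸ hb)
  rw [mem_uIcc_iff_not_lt_iff_lt hua hub,
    mem_uIcc_iff_not_lt_iff_lt (π.injective.ne hua) (π.injective.ne hub),
    isModuleSet_invGraph_iff.1 hM u hu a ha b hb]

theorem image_union_uIcc (hM : (invGraph π).IsModuleSet M) (ha : a ∈ M) (hb : b ∈ M) :
    π '' (M ∪ uIcc a b) = π '' M ∪ uIcc (π a) (π b) := by
  ext x
  obtain ⟨u, rfl⟩ := π.surjective x
  simp only [image_union, mem_union, π.injective.mem_set_image]
  by_cases hu : u ∈ M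
  · simp [hu]
  · simp [hu, hM.mem_uIcc_iff_apply_mem_uIcc hu ha hb]

theorem ordConnected_image_iff (hM : (invGraph π).IsModuleSet M) :
    (π '' M).OrdConnected ↔ M.OrdConnected := by
  simp only [ordConnected_iff_uIcc_subset, forall_mem_image]
  refine forall₂_congr fun a ha => forall₂_congr fun b hb => ?_
  rw [← union_eq_left, ← union_eq_left, ← hM.image_union_uIcc ha hb,
    π.injective.image_injective.eq_iff]

theorem union_uIcc (hM : (invGraph π).IsModuleSet M) (ha : a ∈ M) (hb : b ∈ M) :
    (invGraph π).IsModuleSet (M ∪ uIcc a b) := by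
  have hM' := isModuleSet_invGraph_iff.1 hM
  refine isModuleSet_invGraph_iff.2 fun v hv => ?_
  obtain ⟨hvM, hvI⟩ := not_or.1 hv
  have hvab : v < a ↔ v < b := lt_iff_lt_of_notMem_uIcc hvI
  have hside : ∀ u ∈ M ∪ uIcc a b, ((v < u ↔ v < a) ↔ (π v < π u ↔ π v < π a)) := by
    intro u hu
    by_cases huM : u ∈ M
    · exact hM' v hvM u huM a ha
    have hu' := hu.resolve_left huM
    exact iff_of_true (lt_iff_lt_of_mem_uIcc hvab hu')
      (lt_iff_lt_of_mem_uIcc ((hM' v hvM a ha b hb).1 hvab)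
        ((hM.mem_uIcc_iff_apply_mem_uIcc huM ha hb).1 hu'))
  intro u hu w hw
  have := hside u hu
  have := hside w hw
  grind

end SimpleGraph.IsModuleSet

theorem isPermInterval_Iic_of_isModuleSet_compl_singleton {w a : Fin n}
    (hM : (invGraph π).IsModuleSet {w}ᶜ) (ha : a < w) : IsPermInterval π (Iic w) := by
  have hside : ∀ u ≠ w, (u ≤ w ↔ (π w < π u ↔ π w < π a)) := by
    intro u hu
    have := isModuleSet_invGraph_iff.1 hM w (notMem_compl_iff.2 rfl) u hu a ha.ne
    grind
  refine isPermInterval_iff.2 ⟨ordConnected_Iic, ?_⟩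
  by_cases hwa : π w < π a
  · have hpre : π ⁻¹' Ici (π w) = Iic w := by
      ext u
      rcases eq_or_ne u w with rfl | hu
      · simp
      · have := hside u hu
        have := π.injective.ne hu
        simp only [mem_preimage, mem_Ici, mem_Iic]
        grind
    rw [← hpre, π.image_preimage]
    exact ordConnected_Ici
  · have hpre : π ⁻¹' Iic (π w) = Iic w := by
      ext u
      rcases eq_or_ne u w with rfl | hu
      · simp
      · have := hside u hu
        simp only [mem_preimage, mem_Iic]
        grind
    rw [← hpre, π.image_preimage]
    exact ordConnected_Iic

theorem exists_nontrivial_isPermInterval {S : Set (Fin n)}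
    (hS : Maximal (fun N => (invGraph π).IsModuleSet N ∧ N ≠ univ) S) (hS₂ : S.Nontrivial) :
    ∃ I, IsPermInterval π I ∧ I.Nontrivial ∧ I ≠ univ := by
  obtain ⟨⟨hmod, hne⟩, hmax⟩ := hS
  have hpos : ∀ a ∈ S, ∀ b ∈ S, uIcc a b ⊆ S ∨ S ∪ uIcc a b = univ := by
    intro a ha b hb
    refine or_iff_not_imp_right.2 fun h => ?_
    exact (union_subset_iff.1 (hmax ⟨hmod.union_uIcc ha hb, h⟩ subset_union_left)).2
  have hval : ∀ x ∈ π '' S, ∀ y ∈ π '' S, uIcc x y ⊆ π '' S ∨ π '' S ∪ uIcc x y = univ := by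
    rintro _ ⟨a, ha, rfl⟩ _ ⟨b, hb, rfl⟩
    rw [← union_eq_left, ← hmod.image_union_uIcc ha hb]
    rcases hpos a ha b hb with h | h
    · rw [union_eq_left.2 h]
      exact Or.inl rfl
    · rw [h, image_univ_of_surjective π.surjective]
      exact Or.inr rfl
  by_cases hconn : S.OrdConnected
  · exact ⟨S, isPermInterval_iff.2 ⟨hconn, hmod.ordConnected_image_iff.2 hconn⟩, hS₂, hne⟩
  have hI : IsPermInterval π Sᶜ := by
    refine isPermInterval_iff.2 ⟨(ordConnected_or_ordConnected_compl hpos).resolve_left hconn, ?_⟩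
    rw [image_compl_eq π.bijective]
    exact (ordConnected_or_ordConnected_compl hval).resolve_left
      (mt hmod.ordConnected_image_iff.1 hconn)
  by_cases hnt : Sᶜ.Nontrivial
  · exact ⟨Sᶜ, hI, hnt, fun h => hS₂.nonempty.ne_empty (compl_univ_iff.1 h)⟩
  simp only [ordConnected_iff, not_forall, not_subset] at hconn
  obtain ⟨a, ha, b, hb, -, u, ⟨hau, hub⟩, hu⟩ := hconn
  have hSu : S = {u}ᶜ := by
    rw [← (not_nontrivial_iff.1 hnt).eq_singleton_of_mem hu, compl_compl]
  have hau' : a < u := lt_of_le_of_ne hau fun h => hu (h ▸ ha)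
  have hub' : u < b := lt_of_le_of_ne hub fun h => hu (h ▸ hb)
  exact ⟨Iic u, isPermInterval_Iic_of_isModuleSet_compl_singleton (hSu ▸ hmod) hau',
    ⟨a, hau'.le, u, mem_Iic.2 le_rfl, hau'.ne⟩,
    fun h => not_le.2 hub' (eq_univ_iff_forall.1 h b)⟩

end invGraph

theorem simplePerm_iff_invGraph_prime {n : ℕ} (π : Equiv.Perm (Fin n)) :
    IsSimplePerm π ↔ (invGraph π).IsPrimeGraph := by
  refine ⟨fun hsimple M hM => ?_, fun hprime I hI => hprime I hI.isModuleSet⟩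
  by_contra! hM'
  obtain ⟨S, hMS, hS⟩ := Finite.exists_le_maximal
    (p := fun N => (invGraph π).IsModuleSet N ∧ N ≠ univ) ⟨hM, hM'.2⟩
  obtain ⟨I, hI, hInt, hIu⟩ :=
    exists_nontrivial_isPermInterval hS ((one_lt_ncard_iff_nontrivial.1 hM'.1).mono hMS)
  rcases hsimple I hI with hle | huniv
  · exact not_lt.2 hle (one_lt_ncard_iff_nontrivial.2 hInt)
  · exact hIu huniv
end

section
/- If π is a simple permutation of {1,…,n}, then the automorphism group of the inversion graph G_π is isomorphic to a subgroup of ℤ/2ℤ × ℤ/2ℤ; in particular, G_π has at most 4 automorphisms and every automorphism of G_π is an involution. -/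
/-!
An automorphism `φ` of `G_π` carries the two transitive orientations of the permutation graph,
`i < j ∧ π j < π i` on `G_π` and `i < j ∧ π i < π j` on its complement, to transitive orientations
of the same graphs. For simple `π` the graph `G_π` is prime (all its modules are trivial): a
minimal nontrivial module that is not a run of consecutive positions is split by a position `v`
lying between two of its elements into smaller modules, so it is a pair `{a, b}` with `a < v < b`,
and then `[a, b)` is a nontrivial interval of `π`. By Gallai's theory all ordered edges of a prime
graph form a single forcing class, so a transitive orientation of it is unique up to reversal.
Hence `φ` preserves or reverses each of the two orientations, which gives two characters
`Aut G_π → ℤ/2`; an automorphism in both kernels is strictly increasing, hence the identity.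
-/

namespace SimpleGraph

variable {V : Type*} (G : SimpleGraph V)

def IsModule (S : Set V) : Prop :=
  ∀ ⦃v⦄, v ∉ S → ∀ ⦃a⦄, a ∈ S → ∀ ⦃b⦄, b ∈ S → (G.Adj v a ↔ G.Adj v b)

def IsPrime : Prop :=
  ∀ S : Set V, G.IsModule S → S.Subsingleton ∨ S = Set.univ

variable {G}

theorem isModule_compl {S : Set V} : Gᶜ.IsModule S ↔ G.IsModule S := by
  refine forall₄_congr fun v hv a ha => forall₂_congr fun b hb => ?_
  have hva : v ≠ a := fun h => hv (h ▸ ha)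
  have hvb : v ≠ b := fun h => hv (h ▸ hb)
  simp only [compl_adj, hva, hvb, ne_eq, not_false_eq_true, true_and, not_iff_not]

theorem IsPrime.compl (hG : G.IsPrime) : Gᶜ.IsPrime :=
  fun S hS => hG S (isModule_compl.mp hS)

structure IsTransitiveOrientation (r : V → V → Prop) : Prop where
  trans : ∀ ⦃a b c⦄, r a b → r b c → r a c
  adj_iff : ∀ a b, G.Adj a b ↔ r a b ∨ r b a

namespace IsTransitiveOrientation

variable {r : V → V → Prop}

theorem adj (hr : G.IsTransitiveOrientation r) {a b : V} (h : r a b) : G.Adj a b :=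
  (hr.adj_iff a b).mpr (Or.inl h)

theorem asymm (hr : G.IsTransitiveOrientation r) {a b : V} (h : r a b) : ¬ r b a :=
  fun h' => G.irrefl (hr.adj (hr.trans h h'))

theorem rel_iff_not_rel (hr : G.IsTransitiveOrientation r) {a b : V} (h : G.Adj a b) :
    r a b ↔ ¬ r b a :=
  ⟨hr.asymm, fun h' => ((hr.adj_iff a b).mp h).resolve_right h'⟩

theorem comap {W : Type*} {H : SimpleGraph W} (φ : G ≃g H) {s : W → W → Prop}
    (hs : H.IsTransitiveOrientation s) : G.IsTransitiveOrientation fun a b => s (φ a) (φ b) where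
  trans _ _ _ h h' := hs.trans h h'
  adj_iff _ _ := φ.map_adj_iff.symm.trans (hs.adj_iff _ _)

end IsTransitiveOrientation

variable (G) in
/-- Gallai's relation `Γ` on ordered edges, together with edge reversal: in a transitive
orientation, edges `ab` and `ab'` with `b`, `b'` non-adjacent point the same way at `a`. -/
inductive Forces : V × V → V × V → Prop
  | swap {a b : V} : G.Adj a b → Forces (a, b) (b, a)
  | step {a b b' : V} : G.Adj a b → G.Adj a b' → Gᶜ.Adj b b' → Forces (a, b) (a, b')

theorem Forces.symm {p q : V × V} (h : G.Forces p q) : G.Forces q p := by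
  cases h with
  | swap hab => exact .swap hab.symm
  | step hab hab' hbb' => exact .step hab' hab hbb'.symm

theorem Forces.adj {p q : V × V} (h : G.Forces p q) : G.Adj q.1 q.2 := by
  cases h with
  | swap hab => exact hab.symm
  | step _ hab' _ => exact hab'

instance : Std.Symm G.Forces := ⟨fun _ _ => Forces.symm⟩

open Relation

theorem adj_of_reflTransGen_forces {p q : V × V} (hp : G.Adj p.1 p.2)
    (h : ReflTransGen G.Forces p q) : G.Adj q.1 q.2 := by
  induction h with
  | refl => exact hp
  | tail _ hqr _ => exact hqr.adj

variable (G) in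
def forcingSpan (p : V × V) : Set V := {x | ∃ y, ReflTransGen G.Forces p (x, y)}

theorem adj_iff_adj_of_notMem_forcingSpan {p q : V × V} {v : V} (hv : v ∉ G.forcingSpan p)
    (hpq : ReflTransGen G.Forces p q) (hq : G.Adj q.1 q.2) : G.Adj v q.1 ↔ G.Adj v q.2 := by
  suffices key : ∀ q : V × V, ReflTransGen G.Forces p q → G.Adj q.1 q.2 → G.Adj v q.1 →
      G.Adj v q.2 by
    refine ⟨key q hpq hq, key (q.2, q.1) (hpq.tail (.swap hq)) hq.symm⟩
  intro q hpq hq hvq₁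
  by_contra hvq₂
  have hne : q.2 ≠ v := fun h => hv ⟨q.1, h ▸ hpq.tail (.swap hq)⟩
  exact hv ⟨q.1, (hpq.tail (.step hq hvq₁.symm ⟨hne, fun h => hvq₂ h.symm⟩)).tail
    (.swap hvq₁.symm)⟩

theorem isModule_forcingSpan (p : V × V) : G.IsModule (G.forcingSpan p) := by
  intro v hv
  have key : ∀ q, ReflTransGen G.Forces p q → (G.Adj v q.1 ↔ G.Adj v p.1) := by
    intro q hq
    induction hq with
    | refl => rfl
    | tail hpq hqr ih =>
      cases hqr with
      | swap hab =>
        exact (adj_iff_adj_of_notMem_forcingSpan hv hpq hab).symm.trans ih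
      | step => exact ih
  rintro a ⟨_, ha⟩ b ⟨_, hb⟩
  exact (key _ ha).trans (key _ hb).symm

theorem IsPrime.forcingSpan_eq_univ (hG : G.IsPrime) {p : V × V} (hp : G.Adj p.1 p.2) :
    G.forcingSpan p = Set.univ := by
  refine (hG _ (isModule_forcingSpan p)).resolve_left fun hs => hp.ne (hs ?_ ?_)
  · exact ⟨p.2, .refl⟩
  · exact ⟨p.1, .single (.swap hp)⟩

theorem IsPrime.forces_triangle (hG : G.IsPrime) {a s t : V} (has : G.Adj a s)
    (hat : G.Adj a t) (hst : G.Adj s t) :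
    ReflTransGen G.Forces (s, t) (s, a) ∨ ReflTransGen G.Forces (s, t) (t, a) := by
  -- Otherwise every pair forced by `(s, t)` has both endpoints adjacent to `a`, so `a` would lie
  -- outside the forcing span of `(s, t)`.
  by_contra! hnot
  let P : V → Prop := fun x =>
    G.Adj x a ∧ (ReflTransGen G.Forces (x, a) (s, a) ∨ ReflTransGen G.Forces (x, a) (t, a))
  have hP : ∀ q, ReflTransGen G.Forces (s, t) q → P q.1 ∧ P q.2 := by
    intro q hq
    induction hq with
    | refl => exact ⟨⟨has.symm, .inl .refl⟩, ⟨hat.symm, .inr .refl⟩⟩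
    | tail hq hqr ih =>
      cases hqr with
      | swap => exact ih.symm
      | @step x y y' hxy hxy' hyy' =>
        obtain ⟨⟨hxa, hx⟩, hya, hy⟩ := ih
        have hy'a : G.Adj y' a := by
          by_contra hy'a
          have hy'a : Gᶜ.Adj y' a := ⟨fun h => hyy'.2 (h ▸ hya), hy'a⟩
          have hxa_forced := (hq.tail (.step hxy hxy' hyy')).tail (.step hxy' hxa hy'a)
          exact hx.elim (fun h => hnot.1 (hxa_forced.trans h)) fun h => hnot.2 (hxa_forced.trans h)
        have hy'y : ReflTransGen G.Forces (y', a) (y, a) :=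
          ((ReflTransGen.single (.swap hy'a)).tail (.step hy'a.symm hya.symm hyy'.symm)).tail
            (.swap hya.symm)
        exact ⟨⟨hxa, hx⟩, hy'a, hy.imp hy'y.trans hy'y.trans⟩
  obtain ⟨b, hab⟩ : a ∈ G.forcingSpan (s, t) := hG.forcingSpan_eq_univ (p := (s, t)) hst ▸ trivial
  exact G.irrefl (hP _ hab).1.1

theorem IsPrime.forces_connected (hG : G.IsPrime) {p q : V × V} (hp : G.Adj p.1 p.2)
    (hq : G.Adj q.1 q.2) : ReflTransGen G.Forces p q := by
  obtain ⟨u, w⟩ := q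
  obtain ⟨r, hpr⟩ : u ∈ G.forcingSpan p := hG.forcingSpan_eq_univ hp ▸ trivial
  have hur : G.Adj u r := adj_of_reflTransGen_forces hp hpr
  refine hpr.trans ?_
  rcases eq_or_ne r w with rfl | hne
  · rfl
  by_cases hrw : G.Adj r w
  · rcases hG.forces_triangle hur.symm hrw hq with h | h
    · exact _root_.symm h
    rcases hG.forces_triangle hq.symm hrw.symm hur with h' | h'
    · exact h'
    · exact h'.trans ((ReflTransGen.single (.swap hrw)).trans (_root_.symm h))
  · exact .single (.step hur hq ⟨hne, hrw⟩)

namespace IsTransitiveOrientation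

variable {r s : V → V → Prop}

theorem rel_iff_of_step (hr : G.IsTransitiveOrientation r) {a b b' : V} (hab : G.Adj a b)
    (hab' : G.Adj a b') (hbb' : Gᶜ.Adj b b') : r a b ↔ r a b' := by
  have key : ∀ {c c'}, G.Adj a c' → Gᶜ.Adj c c' → r a c → r a c' := fun hac' hcc' hac =>
    (hr.rel_iff_not_rel hac').mpr fun hc'a => hcc'.2 (hr.adj (hr.trans hc'a hac)).symm
  exact ⟨key hab' hbb', key hab hbb'.symm⟩

theorem agree_iff_of_reflTransGen_forces (hr : G.IsTransitiveOrientation r)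
    (hs : G.IsTransitiveOrientation s) {p q : V × V} (hpq : ReflTransGen G.Forces p q) :
    (r p.1 p.2 ↔ s p.1 p.2) ↔ (r q.1 q.2 ↔ s q.1 q.2) := by
  induction hpq with
  | refl => rfl
  | tail _ hqq' ih =>
    refine ih.trans ?_
    cases hqq' with
    | swap hab => rw [hr.rel_iff_not_rel hab, hs.rel_iff_not_rel hab, not_iff_not]
    | step hab hab' hbb' => rw [hr.rel_iff_of_step hab hab' hbb', hs.rel_iff_of_step hab hab' hbb']

end IsTransitiveOrientation

theorem IsPrime.isTransitiveOrientation_unique (hG : G.IsPrime) {r s : V → V → Prop}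
    (hr : G.IsTransitiveOrientation r) (hs : G.IsTransitiveOrientation s) :
    (∀ a b, r a b → s a b) ∨ (∀ a b, r a b → s b a) := by
  by_cases hE : ∃ a b, r a b
  · obtain ⟨a₀, b₀, h₀⟩ := hE
    have agree : ∀ a b, r a b → (s a₀ b₀ ↔ s a b) := fun a b hab => by
      simpa [hab, h₀] using hr.agree_iff_of_reflTransGen_forces hs
        (hG.forces_connected (p := (a₀, b₀)) (q := (a, b)) (hr.adj h₀) (hr.adj hab))
    by_cases hs₀ : s a₀ b₀
    · exact .inl fun a b hab => (agree a b hab).mp hs₀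
    · exact .inr fun a b hab => ((hs.adj_iff a b).mp (hr.adj hab)).resolve_left
        fun h => hs₀ ((agree a b hab).mpr h)
  · exact .inl fun a b hab => (hE ⟨a, b, hab⟩).elim

def Iso.compl {W : Type*} {H : SimpleGraph W} (φ : G ≃g H) : Gᶜ ≃g Hᶜ where
  toEquiv := φ.toEquiv
  map_rel_iff' := by simp [φ.injective.ne_iff, φ.map_adj_iff]

variable (G) in
def autCompl : (G ≃g G) →* (Gᶜ ≃g Gᶜ) where
  toFun := Iso.compl
  map_one' := rfl
  map_mul' _ _ := rfl

namespace IsPrime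

variable {r : V → V → Prop}

theorem preserves_iff (hG : G.IsPrime) (hr : G.IsTransitiveOrientation r) (φ : G ≃g G)
    {a b : V} (hab : r a b) : (∀ x y, r x y → r (φ x) (φ y)) ↔ r (φ a) (φ b) :=
  ⟨fun h => h a b hab, fun h => (hG.isTransitiveOrientation_unique hr (hr.comap φ)).resolve_right
    fun h' => hr.asymm h (h' a b hab)⟩

theorem preserves_mul_iff (hG : G.IsPrime) (hr : G.IsTransitiveOrientation r) (φ ψ : G ≃g G) :
    (∀ a b, r a b → r ((φ * ψ) a) ((φ * ψ) b)) ↔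
      ((∀ a b, r a b → r (φ a) (φ b)) ↔ ∀ a b, r a b → r (ψ a) (ψ b)) := by
  by_cases hE : ∃ a b, r a b
  · obtain ⟨a, b, hab⟩ := hE
    rw [hG.preserves_iff hr (φ * ψ) hab, hG.preserves_iff hr ψ hab, RelIso.mul_apply,
      RelIso.mul_apply]
    rcases (hr.adj_iff _ _).mp (ψ.map_adj_iff.mpr (hr.adj hab)) with hψ | hψ
    · rw [hG.preserves_iff hr φ hψ]
      simp [hψ]
    · rw [hG.preserves_iff hr φ hψ, hr.rel_iff_not_rel (φ.map_adj_iff.mpr (hr.adj hψ)).symm]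
      simp [hr.asymm hψ]
  · simp only [not_exists] at hE
    simp [hE]

open scoped Classical in
noncomputable def orientationChar (hG : G.IsPrime) (hr : G.IsTransitiveOrientation r) :
    (G ≃g G) →* Multiplicative (ZMod 2) :=
  MonoidHom.mk' (fun φ => .ofAdd (if ∀ a b, r a b → r (φ a) (φ b) then 0 else 1)) fun φ ψ => by
    rw [← ofAdd_add, hG.preserves_mul_iff hr]
    congr 1
    split_ifs <;> simp_all [CharTwo.add_self_eq_zero]

theorem orientationChar_eq_one_iff (hG : G.IsPrime) (hr : G.IsTransitiveOrientation r)
    (φ : G ≃g G) : hG.orientationChar hr φ = 1 ↔ ∀ a b, r a b → r (φ a) (φ b) := by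
  classical
  simp [orientationChar]

end IsPrime

end SimpleGraph

theorem isPermInterval_of_ordConnected {n : ℕ} {π : Equiv.Perm (Fin n)} {I : Set (Fin n)}
    (hI : I.OrdConnected) (hπI : (π '' I).OrdConnected) : IsPermInterval π I :=
  ⟨fun _ _ _ ha hc hab hbc => hI.out ha hc ⟨hab, hbc⟩,
    fun _ _ _ ha hc hab hbc => hπI.out ha hc ⟨hab, hbc⟩⟩

theorem IsSimplePerm.subsingleton_or_eq_univ {n : ℕ} {π : Equiv.Perm (Fin n)}
    (hπ : IsSimplePerm π) {I : Set (Fin n)} (hI : IsPermInterval π I) :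
    I.Subsingleton ∨ I = Set.univ :=
  (hπ I hI).imp_left Set.ncard_le_one_iff_subsingleton.mp

namespace invGraph

open SimpleGraph Set

variable {n : ℕ} {π : Equiv.Perm (Fin n)}

theorem adj_iff {i j : Fin n} :
    (invGraph π).Adj i j ↔ (i < j ∧ π j < π i) ∨ (j < i ∧ π i < π j) := by
  rw [invGraph, fromRel_adj, and_iff_right_iff_imp]
  rintro (h | h)
  exacts [h.1.ne, h.1.ne']

theorem adj_iff_of_lt {i j : Fin n} (h : i < j) : (invGraph π).Adj i j ↔ π j < π i := by
  rw [adj_iff]; omega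

theorem isTransitiveOrientation :
    (invGraph π).IsTransitiveOrientation fun i j => i < j ∧ π j < π i where
  trans _ _ _ h h' := ⟨h.1.trans h'.1, h'.2.trans h.2⟩
  adj_iff _ _ := adj_iff

theorem compl_isTransitiveOrientation :
    (invGraph π)ᶜ.IsTransitiveOrientation fun i j => i < j ∧ π i < π j where
  trans _ _ _ h h' := ⟨h.1.trans h'.1, h.2.trans h'.2⟩
  adj_iff i j := by
    have := π.injective.ne_iff (x := i) (y := j)
    rw [compl_adj, adj_iff]
    omega

theorem adj_iff_adj_of_lt_of_lt {i j k : Fin n} (hij : i < j) (hjk : j < k)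
    (h : (invGraph π).Adj i j ↔ (invGraph π).Adj j k) :
    (invGraph π).Adj i k ↔ (invGraph π).Adj i j := by
  have := π.injective.ne_iff (x := i) (y := k)
  rw [adj_iff_of_lt hij, adj_iff_of_lt hjk] at h
  rw [adj_iff_of_lt (hij.trans hjk), adj_iff_of_lt hij]
  omega

variable {S : Set (Fin n)}

theorem isModule_inter_Iio (hS : (invGraph π).IsModule S) {v : Fin n} (hv : v ∉ S) :
    (invGraph π).IsModule (S ∩ Iio v) := by
  rintro u hu x ⟨hxS, hxv⟩ y ⟨hyS, hyv⟩
  by_cases huS : u ∈ S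
  · have hvu : v < u :=
      lt_of_le_of_ne (not_lt.mp fun h => hu ⟨huS, h⟩) (ne_of_mem_of_not_mem huS hv).symm
    have key : ∀ x ∈ S, x < v → ((invGraph π).Adj u x ↔ (invGraph π).Adj v x) :=
      fun x hxS hxv => by
        rw [adj_comm, adj_iff_adj_of_lt_of_lt hxv hvu ((adj_comm _ _ _).trans (hS hv hxS huS)),
          adj_comm]
    exact (key x hxS hxv).trans ((hS hv hxS hyS).trans (key y hyS hyv).symm)
  · exact hS huS hxS hyS

theorem isModule_inter_Ioi (hS : (invGraph π).IsModule S) {v : Fin n} (hv : v ∉ S) :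
    (invGraph π).IsModule (S ∩ Ioi v) := by
  rintro u hu x ⟨hxS, hvx⟩ y ⟨hyS, hvy⟩
  by_cases huS : u ∈ S
  · have huv : u < v :=
      lt_of_le_of_ne (not_lt.mp fun h => hu ⟨huS, h⟩) (ne_of_mem_of_not_mem huS hv)
    have key : ∀ x ∈ S, v < x → ((invGraph π).Adj u x ↔ (invGraph π).Adj u v) :=
      fun x hxS hvx => adj_iff_adj_of_lt_of_lt huv hvx ((adj_comm _ _ _).trans (hS hv huS hxS))
    exact (key x hxS hvx).trans (key y hyS hvy).symm
  · exact hS huS hxS hyS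

theorem mem_uIoo_iff_of_isModule (hS : (invGraph π).IsModule S) {a b u : Fin n} (ha : a ∈ S)
    (hb : b ∈ S) (hu : u ∉ S) : u ∈ uIoo a b ↔ π u ∈ uIoo (π a) (π b) := by
  have hadj := hS hu ha hb
  have hua := (ne_of_mem_of_not_mem ha hu).symm
  have hub := (ne_of_mem_of_not_mem hb hu).symm
  have := π.injective.ne hua
  have := π.injective.ne hub
  rw [adj_iff, adj_iff] at hadj
  simp only [uIoo, mem_Ioo, min_lt_iff, lt_max_iff]
  omega

theorem isPermInterval_of_isModule (hS : (invGraph π).IsModule S) (hc : S.OrdConnected) :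
    IsPermInterval π S := by
  refine isPermInterval_of_ordConnected hc ⟨?_⟩
  rintro _ ⟨x, hx, rfl⟩ _ ⟨z, hz, rfl⟩ w hw
  refine ⟨π.symm w, by_contra fun hu => hu (hc.uIcc_subset hx hz ?_), π.apply_symm_apply w⟩
  refine uIoo_subset_uIcc_self ((mem_uIoo_iff_of_isModule hS hx hz hu).mpr ?_)
  have hwx : w ≠ π x := fun h => hu (by rwa [h, π.symm_apply_apply])
  have hwz : w ≠ π z := fun h => hu (by rwa [h, π.symm_apply_apply])
  rw [π.apply_symm_apply]
  simp only [mem_Icc] at hw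
  simp only [uIoo, mem_Ioo, min_lt_iff, lt_max_iff]
  omega

theorem isPermInterval_Ico {a b : Fin n} (hS : (invGraph π).IsModule {a, b}) (hab : a < b) :
    IsPermInterval π (Ico a b) := by
  have hIoo : ∀ u, u ≠ a → u ≠ b → (a < u ∧ u < b ↔ π u ∈ uIoo (π a) (π b)) := by
    intro u hua hub
    rw [← mem_uIoo_iff_of_isModule hS (by simp) (by simp) (by simp [hua, hub]), uIoo_of_lt hab,
      mem_Ioo]
  refine isPermInterval_of_ordConnected ordConnected_Ico ⟨?_⟩
  rintro _ ⟨x, ⟨hax, hxb⟩, rfl⟩ _ ⟨z, ⟨haz, hzb⟩, rfl⟩ w hw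
  refine ⟨π.symm w, ?_, π.apply_symm_apply w⟩
  have hval : ∀ x, a ≤ x → x < b → π x = π a ∨ π x ∈ uIoo (π a) (π b) := fun x hax hxb =>
    (eq_or_ne x a).imp (congrArg π) fun hxa => (hIoo x hxa hxb.ne).mp ⟨hax.lt_of_ne' hxa, hxb⟩
  have hx := hval x hax hxb
  have hz := hval z haz hzb
  have hπab := π.injective.ne hab.ne
  have hwu : π (π.symm w) = w := π.apply_symm_apply w
  simp only [uIoo, mem_Ioo, min_lt_iff, lt_max_iff, mem_Icc] at hx hz hw
  rcases eq_or_ne (π.symm w) a with hua | hua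
  · exact ⟨hua.ge, hua ▸ hab⟩
  rcases eq_or_ne (π.symm w) b with hub | hub
  · rw [hub] at hwu
    omega
  have := π.injective.ne hua
  have := π.injective.ne hub
  have hu := (hIoo _ hua hub).mpr (by simp only [uIoo, mem_Ioo, min_lt_iff, lt_max_iff]; omega)
  exact ⟨hu.1.le, hu.2⟩

theorem isPrime (hπ : IsSimplePerm π) : (invGraph π).IsPrime := by
  intro S hS
  rw [or_iff_not_imp_left, not_subsingleton_iff]
  intro hnt
  by_contra hne
  induction S using WellFoundedLT.induction with
  | _ S ih =>
  by_cases hc : S.OrdConnected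
  · exact hnt.not_subsingleton
      ((hπ.subsingleton_or_eq_univ (isPermInterval_of_isModule hS hc)).resolve_right hne)
  obtain ⟨a, ha, b, hb, v, ⟨hav, hvb⟩, hv⟩ : ∃ a ∈ S, ∃ b ∈ S, ∃ v ∈ Icc a b, v ∉ S := by
    simpa [ordConnected_def, not_subset] using hc
  replace hav : a < v := hav.lt_of_ne (ne_of_mem_of_not_mem ha hv)
  replace hvb : v < b := hvb.lt_of_ne (ne_of_mem_of_not_mem hb hv).symm
  have hsmall : ∀ T ⊆ S, (invGraph π).IsModule T → a ∉ T ∨ b ∉ T → T.Subsingleton := by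
    intro T hTS hT hab
    have hST : ¬S ⊆ T := fun h => hab.elim (· (h ha)) (· (h hb))
    by_contra hT'
    exact ih T ⟨hTS, hST⟩ hT (not_subsingleton_iff.mp hT') fun h => hST (h ▸ subset_univ S)
  have hSab : S = {a, b} := by
    ext x
    refine ⟨fun hx => ?_, by rintro (rfl | rfl) <;> assumption⟩
    rcases lt_or_gt_of_ne (ne_of_mem_of_not_mem hx hv) with h | h
    · exact .inl (hsmall _ inter_subset_left (isModule_inter_Iio hS hv)
        (.inr fun h => h.2.not_gt hvb) ⟨hx, h⟩ ⟨ha, hav⟩)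
    · exact .inr (hsmall _ inter_subset_left (isModule_inter_Ioi hS hv)
        (.inl fun h => h.2.not_gt hav) ⟨hx, h⟩ ⟨hb, hvb⟩)
  subst hSab
  rcases hπ.subsingleton_or_eq_univ (isPermInterval_Ico hS (hav.trans hvb)) with h | h
  · exact hav.ne (h ⟨le_rfl, hav.trans hvb⟩ ⟨hav.le, hvb⟩)
  · exact (h ▸ mem_univ b : b ∈ Ico a b).2.false

noncomputable def kleinChar (hπ : IsSimplePerm π) :
    (invGraph π ≃g invGraph π) →* Multiplicative (ZMod 2 × ZMod 2) :=
  (MulEquiv.prodMultiplicative _ _).symm.toMonoidHom.comp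
    ((((isPrime hπ).compl.orientationChar compl_isTransitiveOrientation).comp (autCompl _)).prod
      ((isPrime hπ).orientationChar isTransitiveOrientation))

theorem kleinChar_injective (hπ : IsSimplePerm π) : Function.Injective (kleinChar hπ) := by
  refine (injective_iff_map_eq_one _).mpr fun φ hφ => ?_
  simp only [kleinChar, MonoidHom.coe_comp, Function.comp_apply, MonoidHom.prod_apply,
    MulEquiv.coe_toMonoidHom, MulEquiv.map_eq_one_iff, Prod.mk_eq_one] at hφ
  rw [IsPrime.orientationChar_eq_one_iff, IsPrime.orientationChar_eq_one_iff] at hφ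
  have hmono : StrictMono φ := fun i j hij => by
    rcases lt_or_gt_of_ne (π.injective.ne hij.ne) with h | h
    · exact (hφ.1 i j ⟨hij, h⟩).1
    · exact (hφ.2 i j ⟨hij, h⟩).1
  exact RelIso.ext fun x => congrFun (congrArg DFunLike.coe
    (Subsingleton.elim (hmono.orderIsoOfSurjective φ φ.surjective) (.refl _))) x

end invGraph

/-- The automorphism group of the inversion graph of a simple permutation embeds in
`ℤ/2 × ℤ/2`; in particular it has at most `4` elements, all of them involutions. -/
theorem aut_invGraph_subgroup_klein {n : ℕ} (π : Equiv.Perm (Fin n))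
    (hπ : IsSimplePerm π) :
    (∃ f : (invGraph π ≃g invGraph π) →* Multiplicative (ZMod 2 × ZMod 2),
        Function.Injective f) ∧
      Nat.card (invGraph π ≃g invGraph π) ≤ 4 ∧
      ∀ φ : invGraph π ≃g invGraph π, φ * φ = 1 := by
  have hinj := invGraph.kleinChar_injective hπ
  refine ⟨⟨_, hinj⟩, ?_, fun φ => hinj ?_⟩
  · calc Nat.card (invGraph π ≃g invGraph π)
        ≤ Nat.card (Multiplicative (ZMod 2 × ZMod 2)) := Nat.card_le_card_of_injective _ hinj
      _ = 4 := by simp [Nat.card_eq_fintype_card]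
  · rw [map_mul, map_one]
    exact (by decide : ∀ x : Multiplicative (ZMod 2 × ZMod 2), x * x = 1) _
end

section
/- For every integer k ≥ 1 and every finite simple graph G on n vertices with n ≥ 2(k−1) + 2^{2(k−1)} + 1, the graph G has an induced subgraph on 2k vertices that is a k-letter graph for the word ℓ₁ ℓ₂ ⋯ ℓ_k ℓ_k ⋯ ℓ₂ ℓ₁ over a k-letter alphabet {ℓ₁,…,ℓ_k}; consequently, the lettericity of G satisfies ℓ(G) ≤ n − k. -/
/-- The letter graph of a word `w` with respect to a decoder `D`: `i < j` are adjacent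
iff `(w i, w j) ∈ D`. -/
def letterGraph {A : Type} (D : Set (A × A)) {n : ℕ} (w : Fin n → A) :
    SimpleGraph (Fin n) :=
  SimpleGraph.fromRel fun i j => i < j ∧ (w i, w j) ∈ D

/-- `G` is a `k`-letter graph: it is isomorphic to a letter graph over a `k`-letter
alphabet. -/
def IsKLetterGraph {V : Type*} (G : SimpleGraph V) (k : ℕ) : Prop :=
  ∃ (n : ℕ) (D : Set (Fin k × Fin k)) (w : Fin n → Fin k),
    Nonempty (G ≃g letterGraph D w)

/-- The lettericity of a graph: the least `k` such that it is a `k`-letter graph. -/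
noncomputable def lettericity {V : Type*} (G : SimpleGraph V) : ℕ :=
  sInf {k | IsKLetterGraph G k}

/-- The word `ℓ₁ ℓ₂ ⋯ ℓ_k ℓ_k ⋯ ℓ₂ ℓ₁` over the alphabet `Fin k`. -/
def mirrorWord (k : ℕ) : Fin (2 * k) → Fin k := fun i =>
  if h : (i : ℕ) < k then ⟨i, h⟩ else ⟨2 * k - 1 - i, by have := i.isLt; omega⟩

set_option maxHeartbeats 1000000 in

lemma greedy_pairs {V : Type*} [Fintype V] (G : SimpleGraph V) :
    ∀ j : ℕ, (∀ a, a < j → 2*a + 2^(2*a) + 1 ≤ Fintype.card V) →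
    ∃ q : Fin j → V × V,
      Function.Injective (fun x : Fin j × Bool => if x.2 then (q x.1).1 else (q x.1).2) ∧
      ∀ a b : Fin j, a < b →
        ((G.Adj (q a).1 (q b).1 ↔ G.Adj (q a).1 (q b).2) ∧
         (G.Adj (q a).2 (q b).1 ↔ G.Adj (q a).2 (q b).2)) := by
  intro j
  induction j with
  | zero => exact fun _ => ⟨fun i => i.elim0, fun x => x.1.elim0, fun a => a.elim0⟩
  | succ j ih =>
    intro hc
    obtain ⟨q, hinj, htwin⟩ := ih (fun a ha => hc a (by omega))
    classical
    set F : Fin j × Bool → V := fun x => if x.2 then (q x.1).1 else (q x.1).2 with hF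
    set S : Finset V := Finset.image F Finset.univ with hS
    have hScard : S.card ≤ 2 * j := by
      have := Finset.card_image_le (f := F) (s := Finset.univ)
      simpa [Fintype.card_prod, two_mul, mul_comm] using this
    have hpool : (4:ℕ)^j < Sᶜ.card := by
      have h1 : Sᶜ.card = Fintype.card V - S.card := by
        simp [Finset.card_compl]
      have h2 := hc j (by omega)
      have h4 : (4:ℕ)^j = 2^(2*j) := by
        rw [pow_mul]; norm_num
      omega
    set φ : V → (Fin j → Bool × Bool) := fun z i =>
      (decide (G.Adj z (q i).1), decide (G.Adj z (q i).2)) with hφ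
    have hcard2 : (Finset.univ : Finset (Fin j → Bool × Bool)).card < Sᶜ.card := by
      have : Fintype.card (Fin j → Bool × Bool) = 4^j := by
        simp [Fintype.card_fun]
      simpa [this] using hpool
    obtain ⟨x, hx, y, hy, hxy, hφxy⟩ :=
      Finset.exists_ne_map_eq_of_card_lt_of_maps_to hcard2 (fun a _ => Finset.mem_univ (φ a))
    have hFS : ∀ t, F t ∈ S := fun t => Finset.mem_image_of_mem _ (Finset.mem_univ t)
    have hxS : x ∉ S := Finset.mem_compl.mp hx
    have hyS : y ∉ S := Finset.mem_compl.mp hy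
    obtain ⟨q', hq'⟩ : ∃ q' : Fin (j+1) → V × V, q' = Fin.snoc q (x, y) := ⟨_, rfl⟩
    have hinj' : Function.Injective (fun z : Fin (j+1) × Bool =>
        if z.2 then (q' z.1).1 else (q' z.1).2) := by
      rintro ⟨a, b⟩ ⟨a', b'⟩ h
      simp only [hq'] at h
      rcases eq_or_ne a (Fin.last j) with ha | ha <;> rcases eq_or_ne a' (Fin.last j) with ha' | ha'
      · subst ha; subst ha'
        simp only [Fin.snoc_last] at h
        cases b <;> cases b' <;> simp_all
      · exfalso
        obtain ⟨c, rfl⟩ := Fin.exists_castSucc_eq.mpr ha'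
        subst ha
        simp only [Fin.snoc_last, Fin.snoc_castSucc] at h
        have hin : (if b = true then x else y) ∈ S := by rw [h]; exact hFS (c, b')
        cases b
        · simp only [Bool.false_eq_true, if_false] at hin; exact hyS hin
        · simp only [if_true] at hin; exact hxS hin
      · exfalso
        obtain ⟨c, rfl⟩ := Fin.exists_castSucc_eq.mpr ha
        subst ha'
        simp only [Fin.snoc_last, Fin.snoc_castSucc] at h
        have hin : (if b' = true then x else y) ∈ S := by rw [← h]; exact hFS (c, b)
        cases b'
        · simp only [Bool.false_eq_true, if_false] at hin; exact hyS hin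
        · simp only [if_true] at hin; exact hxS hin
      · obtain ⟨c, rfl⟩ := Fin.exists_castSucc_eq.mpr ha
        obtain ⟨c', rfl⟩ := Fin.exists_castSucc_eq.mpr ha'
        simp only [Fin.snoc_castSucc] at h
        have := hinj (a₁ := (c, b)) (a₂ := (c', b')) (by simpa [hF] using h)
        simp only [Prod.mk.injEq] at this
        exact Prod.ext (by simp [this.1]) this.2
    have htwin' : ∀ a b : Fin (j+1), a < b →
        ((G.Adj (q' a).1 (q' b).1 ↔ G.Adj (q' a).1 (q' b).2) ∧
         (G.Adj (q' a).2 (q' b).1 ↔ G.Adj (q' a).2 (q' b).2)) := by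
      intro a b hab
      rcases eq_or_ne b (Fin.last j) with hb | hb
      · subst hb
        have ha : a ≠ Fin.last j := Fin.ne_last_of_lt hab
        obtain ⟨c, rfl⟩ := Fin.exists_castSucc_eq.mpr ha
        simp only [hq', Fin.snoc_last, Fin.snoc_castSucc]
        have := congrFun hφxy c
        simp only [hφ, Prod.mk.injEq, decide_eq_decide] at this
        constructor
        · rw [G.adj_comm ((q c).1) x, G.adj_comm ((q c).1) y]
          exact this.1
        · rw [G.adj_comm ((q c).2) x, G.adj_comm ((q c).2) y]
          exact this.2
      · obtain ⟨c, rfl⟩ := Fin.exists_castSucc_eq.mpr hb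
        have ha : a ≠ Fin.last j := Fin.ne_last_of_lt (lt_trans hab (Fin.castSucc_lt_last c))
        obtain ⟨c', rfl⟩ := Fin.exists_castSucc_eq.mpr ha
        simp only [hq', Fin.snoc_castSucc]
        exact htwin c' c (by simpa using hab)
    exact ⟨q', hinj', htwin'⟩

set_option maxHeartbeats 1000000 in

lemma exists_equiv_extend {α β : Type*} [Fintype α] [Fintype β]
    (h : Fintype.card α = Fintype.card β) {m : ℕ} (q : Fin m → α) (p : Fin m → β)
    (hq : Function.Injective q) (hp : Function.Injective p) :
    ∃ e : α ≃ β, ∀ i, e (q i) = p i := by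
  classical
  obtain ⟨e1, he1⟩ : ∃ f : (Set.range q) ≃ (Set.range p),
      f = (Equiv.ofInjective q hq).symm.trans (Equiv.ofInjective p hp) := ⟨_, rfl⟩
  have hcard : Fintype.card (↥(Set.range q)ᶜ) = Fintype.card (↥(Set.range p)ᶜ) := by
    rw [Fintype.card_compl_set, Fintype.card_compl_set,
      Set.card_range_of_injective hq, Set.card_range_of_injective hp, h]
  have e2 : (↥(Set.range q)ᶜ) ≃ (↥(Set.range p)ᶜ) := Fintype.equivOfCardEq hcard
  refine ⟨(Equiv.Set.sumCompl (Set.range q)).symm.trans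
    ((e1.sumCongr e2).trans (Equiv.Set.sumCompl (Set.range p))), fun i => ?_⟩
  have h1 : (Equiv.Set.sumCompl (Set.range q)).symm (q i) =
      Sum.inl ⟨q i, Set.mem_range_self i⟩ :=
    Equiv.Set.sumCompl_symm_apply_of_mem _
  simp only [Equiv.trans_apply, h1, Equiv.sumCongr_apply, Sum.map_inl]
  have h2 : e1 ⟨q i, Set.mem_range_self i⟩ = ⟨p i, Set.mem_range_self i⟩ := by
    have : (Equiv.ofInjective q hq).symm ⟨q i, Set.mem_range_self i⟩ = i := by
      apply hq
      have := congrArg Subtype.val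
        ((Equiv.ofInjective q hq).apply_symm_apply ⟨q i, Set.mem_range_self i⟩)
      simpa [Equiv.ofInjective_apply] using this
    apply Subtype.ext
    simp [he1, Equiv.trans_apply, this, Equiv.ofInjective_apply]
  rw [h2]
  simp [Equiv.Set.sumCompl_apply_inl]

set_option maxHeartbeats 1000000 in
lemma mirror_core {V : Type*} (G : SimpleGraph V) (k : ℕ)
    (v u : Fin k → V)
    (hinjF : Function.Injective (fun x : Fin k × Bool => if x.2 then v x.1 else u x.1))
    (htwin : ∀ a b : Fin k, a < b →
        ((G.Adj (v a) (v b) ↔ G.Adj (v a) (u b)) ∧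
         (G.Adj (u a) (v b) ↔ G.Adj (u a) (u b)))) :
    ∃ p : Fin (2*k) → V, Function.Injective p ∧
      (∀ (i : Fin (2*k)) (h : (i:ℕ) < k), p i = v ⟨i, h⟩) ∧
      (∀ (i : Fin (2*k)) (h : ¬(i:ℕ) < k),
        p i = u ⟨2*k-1-(i:ℕ), by have := i.isLt; omega⟩) ∧
      ∃ D : Set (Fin k × Fin k),
        Nonempty ((G.induce (Set.range p)) ≃g letterGraph D (mirrorWord k)) := by
  classical
  obtain ⟨p, hpdef⟩ : ∃ p : Fin (2*k) → V,
      p = fun i : Fin (2*k) => if (i:ℕ) < k then v (mirrorWord k i) else u (mirrorWord k i) := ⟨_, rfl⟩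
  have hpe1 : ∀ (i : Fin (2*k)) (h : (i:ℕ) < k), p i = v ⟨i, h⟩ := by
    intro i h
    simp [hpdef, h, mirrorWord]
  have hpe2 : ∀ (i : Fin (2*k)) (h : ¬(i:ℕ) < k),
      p i = u ⟨2*k-1-(i:ℕ), by have := i.isLt; omega⟩ := by
    intro i h
    simp [hpdef, h, mirrorWord]
  have hp : Function.Injective p := by
    intro i i' h
    by_cases hi : (i:ℕ) < k <;> by_cases hi' : (i':ℕ) < k
    · rw [hpe1 i hi, hpe1 i' hi'] at h
      have := hinjF (a₁ := (⟨i, hi⟩, true)) (a₂ := (⟨i', hi'⟩, true)) (by simpa using h)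
      simp only [Prod.mk.injEq, Fin.mk.injEq] at this
      exact Fin.ext this.1
    · rw [hpe1 i hi, hpe2 i' hi'] at h
      have := hinjF (a₁ := (⟨i, hi⟩, true))
        (a₂ := (⟨2*k-1-(i':ℕ), by have := i'.isLt; omega⟩, false)) (by simpa using h)
      simp only [Prod.mk.injEq] at this
      exact absurd this.2 (by simp)
    · rw [hpe2 i hi, hpe1 i' hi'] at h
      have := hinjF (a₁ := (⟨2*k-1-(i:ℕ), by have := i.isLt; omega⟩, false))
        (a₂ := (⟨i', hi'⟩, true)) (by simpa using h)
      simp only [Prod.mk.injEq] at this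
      exact absurd this.2 (by simp)
    · rw [hpe2 i hi, hpe2 i' hi'] at h
      have := hinjF (a₁ := (⟨2*k-1-(i:ℕ), by have := i.isLt; omega⟩, false))
        (a₂ := (⟨2*k-1-(i':ℕ), by have := i'.isLt; omega⟩, false)) (by simpa using h)
      simp only [Prod.mk.injEq, Fin.mk.injEq] at this
      have hlt := i.isLt
      have hlt' := i'.isLt
      exact Fin.ext (by omega)
  obtain ⟨D, hDdef⟩ : ∃ D : Set (Fin k × Fin k), D =
      {z : Fin k × Fin k | ((z.1:ℕ) < (z.2:ℕ) ∧ G.Adj (v z.1) (v z.2)) ∨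
        ((z.2:ℕ) < (z.1:ℕ) ∧ G.Adj (u z.2) (v z.1)) ∨
        (z.1 = z.2 ∧ G.Adj (v z.1) (u z.1))} := ⟨_, rfl⟩
  have hcore : ∀ i j : Fin (2*k), (i:ℕ) < (j:ℕ) →
      ((mirrorWord k i, mirrorWord k j) ∈ D ↔ G.Adj (p i) (p j)) := by
    intro i j hij
    have hi2 := i.isLt
    have hj2 := j.isLt
    rw [hDdef]
    simp only [Set.mem_setOf_eq]
    by_cases hi : (i:ℕ) < k <;> by_cases hj : (j:ℕ) < k
    · rw [hpe1 i hi, hpe1 j hj]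
      simp only [mirrorWord, dif_pos hi, dif_pos hj, Fin.mk.injEq]
      constructor
      · rintro (⟨-, h2⟩ | ⟨h1, -⟩ | ⟨h1, -⟩)
        · exact h2
        · omega
        · omega
      · intro hA
        exact Or.inl ⟨hij, hA⟩
    · -- i < k ≤ j
      rw [hpe1 i hi, hpe2 j hj]
      simp only [mirrorWord, dif_pos hi, dif_neg hj, Fin.mk.injEq]
      rcases lt_trichotomy (i:ℕ) (2*k-1-(j:ℕ)) with hc | hc | hc
      · have ht := (htwin ⟨i, hi⟩ ⟨2*k-1-(j:ℕ), by omega⟩ (Fin.mk_lt_mk.mpr hc)).1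
        constructor
        · rintro (⟨-, h2⟩ | ⟨h1, -⟩ | ⟨h1, -⟩)
          · exact ht.mp h2
          · omega
          · omega
        · intro hA
          exact Or.inl ⟨hc, ht.mpr hA⟩
      · have hfin : (⟨2*k-1-(j:ℕ), by omega⟩ : Fin k) = ⟨i, hi⟩ := Fin.ext (by simp; omega)
        constructor
        · rintro (⟨h1, -⟩ | ⟨h1, -⟩ | ⟨-, h2⟩)
          · omega
          · omega
          · rw [hfin]
            exact h2
        · intro hA
          rw [hfin] at hA
          exact Or.inr (Or.inr ⟨by omega, hA⟩)
      · have ht := (htwin ⟨2*k-1-(j:ℕ), by omega⟩ ⟨i, hi⟩ (Fin.mk_lt_mk.mpr hc)).2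
        constructor
        · rintro (⟨h1, -⟩ | ⟨-, h2⟩ | ⟨h1, -⟩)
          · omega
          · exact (G.adj_comm _ _).mp h2
          · omega
        · intro hA
          exact Or.inr (Or.inl ⟨hc, (G.adj_comm _ _).mp hA⟩)
    · omega
    · -- k ≤ i < j
      rw [hpe2 i hi, hpe2 j hj]
      simp only [mirrorWord, dif_neg hi, dif_neg hj, Fin.mk.injEq]
      have hba : (2*k-1-(j:ℕ)) < (2*k-1-(i:ℕ)) := by omega
      have ht := (htwin ⟨2*k-1-(j:ℕ), by omega⟩ ⟨2*k-1-(i:ℕ), by omega⟩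
        (Fin.mk_lt_mk.mpr hba)).2
      constructor
      · rintro (⟨h1, -⟩ | ⟨-, h2⟩ | ⟨h1, -⟩)
        · omega
        · exact (G.adj_comm _ _).mp (ht.mp h2)
        · omega
      · intro hA
        exact Or.inr (Or.inl ⟨hba, ht.mpr ((G.adj_comm _ _).mp hA)⟩)
  have hiff : ∀ a b : Fin (2*k), G.Adj (p a) (p b) ↔ (letterGraph D (mirrorWord k)).Adj a b := by
    intro a b
    rw [letterGraph, SimpleGraph.fromRel_adj]
    rcases lt_trichotomy (a:ℕ) (b:ℕ) with h | h | h
    · constructor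
      · intro hA
        exact ⟨Fin.ne_of_val_ne (by omega), Or.inl ⟨Fin.lt_def.mpr h, (hcore a b h).mpr hA⟩⟩
      · rintro ⟨-, (⟨-, hm⟩ | ⟨hlt, -⟩)⟩
        · exact (hcore a b h).mp hm
        · exact absurd (Fin.lt_def.mp hlt) (by omega)
    · have hab : a = b := Fin.ext h
      subst hab
      simp
    · constructor
      · intro hA
        exact ⟨Fin.ne_of_val_ne (by omega),
          Or.inr ⟨Fin.lt_def.mpr h, (hcore b a h).mpr (G.adj_symm hA)⟩⟩
      · rintro ⟨-, (⟨hlt, -⟩ | ⟨-, hm⟩)⟩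
        · exact absurd (Fin.lt_def.mp hlt) (by omega)
        · exact G.adj_symm ((hcore b a h).mp hm)
  refine ⟨p, hp, hpe1, hpe2, D, ⟨SimpleGraph.Iso.symm ⟨Equiv.ofInjective p hp, ?_⟩⟩⟩
  intro a b
  simp only [SimpleGraph.comap_adj, Equiv.ofInjective_apply, Function.Embedding.coe_subtype]
  exact hiff a b

set_option maxHeartbeats 1000000 in
lemma letter_bound {V : Type*} [Fintype V] (G : SimpleGraph V) (k : ℕ) (hk : 1 ≤ k)
    (v u : Fin k → V)
    (htwin : ∀ a b : Fin k, a < b →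
        ((G.Adj (v a) (v b) ↔ G.Adj (v a) (u b)) ∧
         (G.Adj (u a) (v b) ↔ G.Adj (u a) (u b))))
    (p : Fin (2*k) → V) (hp : Function.Injective p)
    (hpe1 : ∀ (i : Fin (2*k)) (h : (i:ℕ) < k), p i = v ⟨i, h⟩)
    (hpe2 : ∀ (i : Fin (2*k)) (h : ¬(i:ℕ) < k),
      p i = u ⟨2*k-1-(i:ℕ), by have := i.isLt; omega⟩)
    (hn2k : 2*k ≤ Fintype.card V) :
    IsKLetterGraph G (Fintype.card V - k) := by
  classical
  obtain ⟨q2, hq2def⟩ : ∃ q2 : Fin (2*k) → Fin (Fintype.card V),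
      q2 = fun i : Fin (2*k) => if (i:ℕ) < k
        then ⟨(i:ℕ), by have := i.isLt; omega⟩
        else ⟨Fintype.card V - 2*k + (i:ℕ), by have := i.isLt; omega⟩ := ⟨_, rfl⟩
  have hq2 : Function.Injective q2 := by
    intro a b h
    have ha := a.isLt; have hb := b.isLt
    have hval := congrArg Fin.val h
    rw [hq2def] at hval
    simp only at hval
    apply Fin.ext
    by_cases h1 : (a:ℕ) < k <;> by_cases h2 : (b:ℕ) < k <;>
      simp only [h1, h2, if_true, if_false] at hval <;> omega
  obtain ⟨e, he⟩ := exists_equiv_extend (by simp) q2 p hq2 hp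
  obtain ⟨w', hw'def⟩ : ∃ w' : Fin (Fintype.card V) → Fin (Fintype.card V - k),
      w' = fun i : Fin (Fintype.card V) => if h : (i:ℕ) < Fintype.card V - k
        then ⟨(i:ℕ), h⟩
        else ⟨Fintype.card V - 1 - (i:ℕ), by have := i.isLt; omega⟩ := ⟨_, rfl⟩
  have hfront : ∀ (i : Fin (Fintype.card V)) (h : (i:ℕ) < k), e i = v ⟨i, h⟩ := by
    intro i h
    have hi := i.isLt
    have hq : q2 ⟨(i:ℕ), by omega⟩ = i := by
      rw [hq2def]
      simp only
      rw [if_pos (by simpa using h)]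
    conv_lhs => rw [← hq, he]
    exact hpe1 _ (by simpa using h)
  have hback : ∀ (i : Fin (Fintype.card V)) (hge : Fintype.card V - k ≤ (i:ℕ))
      (h : Fintype.card V - 1 - (i:ℕ) < k),
      e i = u ⟨Fintype.card V - 1 - (i:ℕ), h⟩ := by
    intro i hge h
    have hi := i.isLt
    have hj : 2*k-1-(Fintype.card V - 1 - (i:ℕ)) < 2*k := by omega
    have hjx : ¬ (2*k-1-(Fintype.card V - 1 - (i:ℕ)) < k) := by omega
    have hq : q2 ⟨2*k-1-(Fintype.card V - 1 - (i:ℕ)), hj⟩ = i := by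
      rw [hq2def]
      simp only
      rw [if_neg (by simpa using hjx)]
      apply Fin.ext
      simp
      omega
    conv_lhs => rw [← hq, he, hpe2 _ (by simpa using hjx)]
    congr 1
    apply Fin.ext
    simp
    omega
  have hsame : ∀ i i' : Fin (Fintype.card V), w' i = w' i' →
      ((i:ℕ) = (i':ℕ) ∨ ((i:ℕ) < k ∧ (i':ℕ) = Fintype.card V - 1 - (i:ℕ)) ∨
       ((i':ℕ) < k ∧ (i:ℕ) = Fintype.card V - 1 - (i':ℕ))) := by
    have hwval : ∀ i : Fin (Fintype.card V), ((w' i : Fin (Fintype.card V - k)) : ℕ) =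
        if (i:ℕ) < Fintype.card V - k then (i:ℕ) else Fintype.card V - 1 - (i:ℕ) := by
      intro i
      rw [hw'def]
      simp only
      split
      · rfl
      · rfl
    intro i i' hw
    have h1 := i.isLt; have h2 := i'.isLt
    have hval : (if (i:ℕ) < Fintype.card V - k then (i:ℕ) else Fintype.card V - 1 - (i:ℕ)) =
        (if (i':ℕ) < Fintype.card V - k then (i':ℕ) else Fintype.card V - 1 - (i':ℕ)) := by
      rw [← hwval i, ← hwval i', hw]
    by_cases c1 : (i:ℕ) < Fintype.card V - k <;> by_cases c2 : (i':ℕ) < Fintype.card V - k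
    · rw [if_pos c1, if_pos c2] at hval; omega
    · rw [if_pos c1, if_neg c2] at hval; omega
    · rw [if_neg c1, if_pos c2] at hval; omega
    · rw [if_neg c1, if_neg c2] at hval; omega
  have hT2 : ∀ (a b : ℕ) (ha : a < k) (hb : b < k), b < a →
      (G.Adj (v ⟨a, ha⟩) (u ⟨b, hb⟩) ↔ G.Adj (u ⟨a, ha⟩) (u ⟨b, hb⟩)) := by
    intro a b ha hb hba
    have ht := (htwin ⟨b, hb⟩ ⟨a, ha⟩ (Fin.mk_lt_mk.mpr hba)).2
    constructor
    · intro h2; exact (G.adj_comm _ _).mp (ht.mp ((G.adj_comm _ _).mp h2))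
    · intro h2; exact (G.adj_comm _ _).mp (ht.mpr ((G.adj_comm _ _).mp h2))
  have hcoh : ∀ i j i' j' : Fin (Fintype.card V), (i:ℕ) < (j:ℕ) → (i':ℕ) < (j':ℕ) →
      w' i = w' i' → w' j = w' j' → G.Adj (e i) (e j) → G.Adj (e i') (e j') := by
    intro i j i' j' hij hij' hwi hwj hadj
    have hi := i.isLt; have hj := j.isLt; have hi' := i'.isLt; have hj' := j'.isLt
    rcases hsame i i' hwi with h1 | ⟨h1a, h1b⟩ | ⟨h1a, h1b⟩ <;>
      rcases hsame j j' hwj with h2 | ⟨h2a, h2b⟩ | ⟨h2a, h2b⟩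
    · have e1 : i' = i := Fin.ext h1.symm
      have e2 : j' = j := Fin.ext h2.symm
      rw [e1, e2]
      exact hadj
    · -- i' = i, j < k, j' = n-1-j
      have e1 : i' = i := Fin.ext h1.symm
      have hik : (i:ℕ) < k := by omega
      rw [hfront i hik, hfront j h2a] at hadj
      have efin : (⟨Fintype.card V - 1 - (j':ℕ), by omega⟩ : Fin k) = ⟨(j:ℕ), h2a⟩ :=
        Fin.ext (by simp; omega)
      rw [e1, hfront i hik, hback j' (by omega) (by omega), efin]
      exact (htwin ⟨(i:ℕ), hik⟩ ⟨(j:ℕ), h2a⟩ (Fin.mk_lt_mk.mpr hij)).1.mp hadj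
    · -- i' = i, j' < k, j = n-1-j'
      have e1 : i' = i := Fin.ext h1.symm
      have hik : (i:ℕ) < k := by omega
      have efin : (⟨Fintype.card V - 1 - (j:ℕ), by omega⟩ : Fin k) = ⟨(j':ℕ), h2a⟩ :=
        Fin.ext (by simp; omega)
      rw [hfront i hik, hback j (by omega) (by omega), efin] at hadj
      rw [e1, hfront i hik, hfront j' h2a]
      exact (htwin ⟨(i:ℕ), hik⟩ ⟨(j':ℕ), h2a⟩ (Fin.mk_lt_mk.mpr (by omega))).1.mpr hadj
    · -- i < k, i' = n-1-i, j' = j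
      have e2 : j' = j := Fin.ext h2.symm
      have hbk : Fintype.card V - 1 - (j:ℕ) < k := by omega
      rw [hfront i h1a, hback j (by omega) (by omega)] at hadj
      have efin : (⟨Fintype.card V - 1 - (i':ℕ), by omega⟩ : Fin k) = ⟨(i:ℕ), h1a⟩ :=
        Fin.ext (by simp; omega)
      rw [e2, hback i' (by omega) (by omega), efin, hback j (by omega) (by omega)]
      exact (hT2 (i:ℕ) (Fintype.card V - 1 - (j:ℕ)) h1a hbk (by omega)).mp hadj
    · exfalso; omega
    · exfalso; omega
    · -- i' < k, i = n-1-i', j' = j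
      have e2 : j' = j := Fin.ext h2.symm
      have hbk : Fintype.card V - 1 - (j:ℕ) < k := by omega
      have efin : (⟨Fintype.card V - 1 - (i:ℕ), by omega⟩ : Fin k) = ⟨(i':ℕ), h1a⟩ :=
        Fin.ext (by simp; omega)
      rw [hback i (by omega) (by omega), hback j (by omega) (by omega), efin] at hadj
      rw [e2, hfront i' h1a, hback j (by omega) (by omega)]
      exact (hT2 (i':ℕ) (Fintype.card V - 1 - (j:ℕ)) h1a hbk (by omega)).mpr hadj
    · exfalso; omega
    · exfalso; omega
  obtain ⟨D', hD'def⟩ : ∃ D' : Set (Fin (Fintype.card V - k) × Fin (Fintype.card V - k)),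
      D' = {z | ∃ i j : Fin (Fintype.card V), (i:ℕ) < (j:ℕ) ∧ w' i = z.1 ∧ w' j = z.2 ∧
        G.Adj (e i) (e j)} := ⟨_, rfl⟩
  have hmain : ∀ i j : Fin (Fintype.card V),
      (letterGraph D' w').Adj i j ↔ G.Adj (e i) (e j) := by
    intro i j
    rw [letterGraph, SimpleGraph.fromRel_adj, hD'def]
    constructor
    · rintro ⟨hne, (⟨hlt, hm⟩ | ⟨hlt, hm⟩)⟩
      · obtain ⟨i0, j0, hij0, hw1, hw2, hadj⟩ := hm
        exact hcoh i0 j0 i j hij0 (Fin.lt_def.mp hlt) hw1 hw2 hadj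
      · obtain ⟨i0, j0, hij0, hw1, hw2, hadj⟩ := hm
        exact (G.adj_comm _ _).mp (hcoh i0 j0 j i hij0 (Fin.lt_def.mp hlt) hw1 hw2 hadj)
    · intro hadj
      have hne : i ≠ j := by
        rintro rfl
        exact G.irrefl hadj
      rcases lt_trichotomy (i:ℕ) (j:ℕ) with h | h | h
      · exact ⟨hne, Or.inl ⟨Fin.lt_def.mpr h, ⟨i, j, h, rfl, rfl, hadj⟩⟩⟩
      · exact absurd (Fin.ext h) hne
      · exact ⟨hne, Or.inr ⟨Fin.lt_def.mpr h, ⟨j, i, h, rfl, rfl, (G.adj_comm _ _).mp hadj⟩⟩⟩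
  refine ⟨Fintype.card V, D', w', ⟨⟨e.symm, ?_⟩⟩⟩
  intro a b
  rw [hmain]
  simp

theorem exists_mirror_letter_subgraph {V : Type*} [Fintype V] (G : SimpleGraph V)
    (k : ℕ) (hk : 1 ≤ k)
    (hn : 2 * (k - 1) + 2 ^ (2 * (k - 1)) + 1 ≤ Fintype.card V) :
    (∃ p : Fin (2 * k) → V, Function.Injective p ∧
        ∃ D : Set (Fin k × Fin k),
          Nonempty ((G.induce (Set.range p)) ≃g letterGraph D (mirrorWord k))) ∧
      lettericity G ≤ Fintype.card V - k := by
  classical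
  have hcv : ∀ a, a < k → 2*a + 2^(2*a) + 1 ≤ Fintype.card V := by
    intro a ha
    have h1 : 2^(2*a) ≤ 2^(2*(k-1)) := Nat.pow_le_pow_right (by norm_num) (by omega)
    omega
  obtain ⟨q, hinjF, htwin⟩ := greedy_pairs G k hcv
  have hpow : 1 ≤ 2^(2*(k-1)) := Nat.one_le_two_pow
  have hn2k : 2*k ≤ Fintype.card V := by omega
  obtain ⟨p, hp, hpe1, hpe2, D, hiso⟩ :=
    mirror_core G k (fun i => (q i).1) (fun i => (q i).2) hinjF htwin
  refine ⟨⟨p, hp, D, hiso⟩, ?_⟩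
  have hmem : IsKLetterGraph G (Fintype.card V - k) :=
    letter_bound G k hk _ _ htwin p hp hpe1 hpe2 hn2k
  exact Nat.sInf_le hmem
end

section
/- For every permutation π of {1,…,n}, the lettericity of the inversion graph G_π is at most ⌈n/2⌉. -/
/-- Key equivalence: for positions `i < j`, being an inversion is determined by the
quotients `⌊π i / 2⌋`, `⌊π j / 2⌋` together with a per-quotient flag. -/
lemma key {n : ℕ} (π : Equiv.Perm (Fin n)) {i j : Fin n} (hij : i < j) :
    (π j < π i) ↔
      ((π j : ℕ)/2 < (π i : ℕ)/2 ∨ ((π i : ℕ)/2 = (π j : ℕ)/2 ∧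
        ∃ u v : Fin n, (u:ℕ)/2 = (π i : ℕ)/2 ∧ (v:ℕ)/2 = (π i : ℕ)/2 ∧ u < v ∧
          π.symm v < π.symm u)) := by
  constructor
  · intro h
    rcases Nat.lt_or_ge ((π j : ℕ)/2) ((π i : ℕ)/2) with h' | h'
    · exact Or.inl h'
    · have heq : (π i : ℕ)/2 = (π j : ℕ)/2 := by
        have : (π j : ℕ) < (π i : ℕ) := h
        omega
      refine Or.inr ⟨heq, π j, π i, heq.symm ▸ rfl, rfl, h, ?_⟩
      simpa using hij
  · rintro (h | ⟨heq, u, v, hu, hv, huv, hsym⟩)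
    · have : (π j : ℕ) < (π i : ℕ) := by omega
      exact this
    · have hne : (π i : ℕ) ≠ (π j : ℕ) := by
        intro hc
        exact absurd (π.injective (Fin.ext hc)) (Fin.ne_of_lt hij)
      have huv' : (u : ℕ) < v := huv
      -- {π i, π j} = {u, v} with u < v
      have hcases : ((π i : ℕ) = u ∧ (π j : ℕ) = v) ∨ ((π i : ℕ) = v ∧ (π j : ℕ) = u) := by
        omega
      rcases hcases with ⟨h1, h2⟩ | ⟨h1, h2⟩
      · exfalso
        have e1 : π i = u := Fin.ext h1
        have e2 : π j = v := Fin.ext h2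
        have : π.symm v < π.symm u := hsym
        rw [← e1, ← e2, Equiv.symm_apply_apply, Equiv.symm_apply_apply] at this
        exact absurd hij (not_lt.mpr this.le)
      · show (π j : ℕ) < (π i : ℕ)
        omega

/-- The lettericity of an inversion graph on `n` vertices is at most `⌈n / 2⌉`. -/
theorem lettericity_invGraph_le {n : ℕ} (π : Equiv.Perm (Fin n)) :
    lettericity (invGraph π) ≤ (n + 1) / 2 := by
  apply Nat.sInf_le
  refine ⟨n,
    {p | (p.2 : ℕ) < (p.1 : ℕ) ∨ (p.1 = p.2 ∧ ∃ u v : Fin n,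
      (u:ℕ)/2 = (p.1:ℕ) ∧ (v:ℕ)/2 = (p.1:ℕ) ∧ u < v ∧ π.symm v < π.symm u)},
    fun i => ⟨(π i : ℕ)/2, by have := (π i).isLt; omega⟩,
    ⟨⟨Equiv.refl _, ?_⟩⟩⟩
  intro i j
  simp only [invGraph, letterGraph, SimpleGraph.fromRel_adj, Equiv.refl_apply,
    Set.mem_setOf_eq, Fin.mk_lt_mk, Fin.mk.injEq]
  constructor
  · rintro ⟨hne, h | h⟩
    · rcases h with ⟨hij, hmem⟩
      refine ⟨hne, Or.inl ⟨hij, ?_⟩⟩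
      have := (key π hij).mpr ?_
      · exact this
      · simpa using hmem
    · rcases h with ⟨hij, hmem⟩
      refine ⟨hne, Or.inr ⟨hij, ?_⟩⟩
      have := (key π hij).mpr ?_
      · exact this
      · simpa using hmem
  · rintro ⟨hne, h | h⟩
    · rcases h with ⟨hij, hinv⟩
      refine ⟨hne, Or.inl ⟨hij, ?_⟩⟩
      simpa using (key π hij).mp hinv
    · rcases h with ⟨hij, hinv⟩
      refine ⟨hne, Or.inr ⟨hij, ?_⟩⟩
      simpa using (key π hij).mp hinv
end

section
/- For every real number α < 1/2, there exists N such that for all n > N there is a simple graph G on n vertices with ℓ_perm(G) > α·n. -/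
/-- The permutation letter graph of a word `w` with respect to a permutation `π`, an
inversion decoder `I` and a noninversion decoder `N`. -/
def permLetterGraph {A : Type} (I N : Set (A × A)) {n : ℕ} (π : Equiv.Perm (Fin n))
    (w : Fin n → A) : SimpleGraph (Fin n) :=
  SimpleGraph.fromRel fun i j =>
    i < j ∧ ((π j < π i ∧ (w i, w j) ∈ I) ∨ (π i < π j ∧ (w i, w j) ∈ N))

/-- `G` is a permutation `k`-letter graph. -/
def IsKPermLetterGraph {V : Type*} (G : SimpleGraph V) (k : ℕ) : Prop :=
  ∃ (n : ℕ) (I N : Set (Fin k × Fin k)) (π : Equiv.Perm (Fin n)) (w : Fin n → Fin k),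
    Nonempty (G ≃g permLetterGraph I N π w)

/-- The least `k` such that `G` is a permutation `k`-letter graph. -/
noncomputable def permLettericity {V : Type*} (G : SimpleGraph V) : ℕ :=
  sInf {k | IsKPermLetterGraph G k}

/-!
Counting. A permutation `k`-letter graph on `Fin n` is determined by its two decoders, its
permutation, its word and a relabelling of the vertices, so there are at most
`2 ^ (2k²) · kⁿ · (n!)²` labelled graphs on `Fin n` with lettericity at most `k`. Among the
`2 ^ (n(n-1)/2)` graphs on `Fin n` some therefore has lettericity above `k` as soon as
`n(n-1)/2 > 2k² + 3 n log₂ n`; for `k ≤ βn` with `β < 1/2` this holds for large `n`, since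
`2β² < 1/2` and `n log n = o(n²)`.
-/

open Filter

theorem permLetterGraph_image_prodMap {A B : Type} {f : A → B} (hf : Function.Injective f)
    (I N : Set (A × A)) {n : ℕ} (π : Equiv.Perm (Fin n)) (w : Fin n → A) :
    permLetterGraph (Prod.map f f '' I) (Prod.map f f '' N) π (f ∘ w) =
      permLetterGraph I N π w := by
  have hff := hf.prodMap hf
  simp only [permLetterGraph, Function.comp_apply, ← Prod.map_apply, hff.mem_set_image]

theorem IsKPermLetterGraph.mono {V : Type*} {G : SimpleGraph V} {k k' : ℕ} (hk : k ≤ k')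
    (h : IsKPermLetterGraph G k) : IsKPermLetterGraph G k' := by
  obtain ⟨n, I, N, π, w, e⟩ := h
  let f : Fin k → Fin k' := Fin.castLE hk
  refine ⟨n, Prod.map f f '' I, Prod.map f f '' N, π, f ∘ w, ?_⟩
  rwa [permLetterGraph_image_prodMap (Fin.castLE_injective hk)]

theorem permLetterGraph_setOf_adj {n : ℕ} (G : SimpleGraph (Fin n)) (π : Equiv.Perm (Fin n)) :
    permLetterGraph {p | G.Adj p.1 p.2} {p | G.Adj p.1 p.2} π id = G := by
  ext i j
  simp only [permLetterGraph, SimpleGraph.fromRel_adj, Set.mem_ofPred_eq, id_eq]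
  constructor
  · rintro ⟨-, ⟨-, ⟨-, h⟩ | ⟨-, h⟩⟩ | ⟨-, ⟨-, h⟩ | ⟨-, h⟩⟩⟩ <;> first | exact h | exact h.symm
  · intro h
    have hπ : π i ≠ π j := π.injective.ne (G.ne_of_adj h)
    refine ⟨G.ne_of_adj h, ?_⟩
    rcases (G.ne_of_adj h).lt_or_gt with hij | hij <;>
      rcases hπ.lt_or_gt with hπij | hπij <;> simp [*, h.symm]

theorem isKPermLetterGraph_self {n : ℕ} (G : SimpleGraph (Fin n)) : IsKPermLetterGraph G n :=
  ⟨n, _, _, 1, id, ⟨by rw [permLetterGraph_setOf_adj]⟩⟩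

theorem isKPermLetterGraph_permLettericity {n : ℕ} (G : SimpleGraph (Fin n)) :
    IsKPermLetterGraph G (permLettericity G) :=
  Nat.sInf_mem (s := {k | IsKPermLetterGraph G k}) ⟨n, isKPermLetterGraph_self G⟩

theorem two_pow_choose_two_le_card_simpleGraph (n : ℕ) :
    2 ^ n.choose 2 ≤ Fintype.card (SimpleGraph (Fin n)) := by
  classical
  let toGraph (S : Set {e : Sym2 (Fin n) // ¬ e.IsDiag}) : SimpleGraph (Fin n) :=
    SimpleGraph.fromEdgeSet (Subtype.val '' S)
  have : Function.LeftInverse (fun G : SimpleGraph (Fin n) => {e | e.1 ∈ G.edgeSet}) toGraph := by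
    intro S
    ext e
    simp [toGraph, e.2]
  simpa only [Fintype.card_set, Sym2.card_subtype_not_diag, Fintype.card_fin] using
    Fintype.card_le_of_injective _ this.injective

open Nat in
theorem card_simpleGraph_le_of_forall_isKPermLetterGraph {n k : ℕ}
    (H : ∀ G : SimpleGraph (Fin n), IsKPermLetterGraph G k) :
    Fintype.card (SimpleGraph (Fin n)) ≤ 2 ^ (2 * k ^ 2) * k ^ n * n ! ^ 2 := by
  classical
  let presentation (d : Set (Fin k × Fin k) × Set (Fin k × Fin k) × Equiv.Perm (Fin n) ×
      (Fin n → Fin k) × Equiv.Perm (Fin n)) : SimpleGraph (Fin n) :=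
    (permLetterGraph d.1 d.2.1 d.2.2.1 d.2.2.2.1).comap d.2.2.2.2
  have hsurj : Function.Surjective presentation := by
    intro G
    obtain ⟨m, I, N, π, w, ⟨e⟩⟩ := H G
    obtain rfl : n = m := Fin.equiv_iff_eq.mp ⟨e.toEquiv⟩
    exact ⟨⟨I, N, π, w, e.toEquiv⟩, by ext; exact e.map_rel_iff⟩
  refine (Fintype.card_le_of_surjective _ hsurj).trans_eq ?_
  simp only [Fintype.card_prod, Fintype.card_set, Fintype.card_perm, Fintype.card_fun,
    Fintype.card_fin]
  ring

open Nat in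
theorem choose_two_mul_log_two_le_of_forall_isKPermLetterGraph {n k : ℕ} (hn : 0 < n)
    (hkn : k ≤ n) (H : ∀ G : SimpleGraph (Fin n), IsKPermLetterGraph G k) :
    (n.choose 2 : ℝ) * Real.log 2 ≤ 2 * k ^ 2 * Real.log 2 + 3 * n * Real.log n := by
  have hnat : 2 ^ n.choose 2 ≤ 2 ^ (2 * k ^ 2) * n ^ (3 * n) :=
    calc 2 ^ n.choose 2 ≤ Fintype.card (SimpleGraph (Fin n)) :=
          two_pow_choose_two_le_card_simpleGraph n
      _ ≤ 2 ^ (2 * k ^ 2) * k ^ n * n ! ^ 2 :=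
          card_simpleGraph_le_of_forall_isKPermLetterGraph H
      _ ≤ 2 ^ (2 * k ^ 2) * n ^ n * (n ^ n) ^ 2 := by
          gcongr
          exact Nat.factorial_le_pow n
      _ = 2 ^ (2 * k ^ 2) * n ^ (3 * n) := by ring
  have hreal : (2 : ℝ) ^ n.choose 2 ≤ 2 ^ (2 * k ^ 2) * (n : ℝ) ^ (3 * n) := by
    exact_mod_cast hnat
  have hlog := Real.log_le_log (by positivity) hreal
  rw [Real.log_mul (by positivity) (by positivity), Real.log_pow, Real.log_pow,
    Real.log_pow] at hlog
  push_cast at hlog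
  linarith

theorem eventually_log_add_lt_mul (d : ℝ) {c : ℝ} (hc : 0 < c) :
    ∀ᶠ x in atTop, Real.log x + d < c * x := by
  filter_upwards [Real.isLittleO_log_id_atTop.bound (half_pos hc), eventually_gt_atTop (2 * d / c),
    eventually_ge_atTop 0] with x hlog hd hx
  rw [div_lt_iff₀ hc] at hd
  simp only [Real.norm_eq_abs, id, abs_of_nonneg hx] at hlog
  linarith [le_abs_self (Real.log x)]

theorem eventually_not_forall_isKPermLetterGraph {β : ℝ} (hβ₀ : 0 ≤ β) (hβ : β < 1 / 2) :
    ∀ᶠ n : ℕ in atTop, ¬ ∀ G : SimpleGraph (Fin n), IsKPermLetterGraph G ⌊β * n⌋₊ := by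
  set L := Real.log 2
  have hL : 0 < L := Real.log_pos one_lt_two
  have hc : 0 < (1 / 2 - 2 * β ^ 2) * L / 3 := by
    have : 2 * β ^ 2 < 1 / 2 := by nlinarith
    exact div_pos (mul_pos (by linarith) hL) three_pos
  filter_upwards [tendsto_natCast_atTop_atTop.eventually (eventually_log_add_lt_mul (L / 6) hc),
    eventually_gt_atTop 0] with n hlog hn H
  have hnR : (0 : ℝ) < n := by exact_mod_cast hn
  have hk : (⌊β * n⌋₊ : ℝ) ≤ β * n := Nat.floor_le (by positivity)
  have hkn : ⌊β * n⌋₊ ≤ n := by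
    have : (⌊β * n⌋₊ : ℝ) ≤ n := by nlinarith
    exact_mod_cast this
  have hcount := choose_two_mul_log_two_le_of_forall_isKPermLetterGraph hn hkn H
  rw [Nat.cast_choose_two] at hcount
  nlinarith [mul_le_mul_of_nonneg_right (pow_le_pow_left₀ (Nat.cast_nonneg _) hk 2) hL.le,
    mul_lt_mul_of_pos_left hlog hnR]

/-- For every `α < 1/2`, all sufficiently large `n` admit `n`-vertex graphs with
permutation lettericity greater than `α·n`. -/
theorem exists_graph_large_permLettericity (α : ℝ) (hα : α < 1 / 2) :
    ∃ N : ℕ, ∀ n : ℕ, N < n →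
      ∃ G : SimpleGraph (Fin n), α * n < (permLettericity G : ℝ) := by
  obtain ⟨N, hN⟩ := eventually_atTop.mp
    (eventually_not_forall_isKPermLetterGraph (le_max_right α 0) (max_lt hα (by norm_num)))
  refine ⟨N, fun n hn ↦ ?_⟩
  by_contra! hsmall
  refine hN n hn.le fun G ↦ (isKPermLetterGraph_permLettericity G).mono (Nat.le_floor ?_)
  exact (hsmall G).trans (by gcongr; exact le_max_left α 0)
end

section
/- A permutation π of {1,…,n} avoids both the pattern 321 and the pattern 3412 if and only if its inversion graph G_π is a forest (i.e., contains no cycle). -/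
/-- `π` contains the pattern `321`: there are indices `i < j < k` with
`π i > π j > π k`. -/
def Contains321 {n : ℕ} (π : Equiv.Perm (Fin n)) : Prop :=
  ∃ i j k : Fin n, i < j ∧ j < k ∧ π k < π j ∧ π j < π i

/-- `π` contains the pattern `3412`: there are indices `i < j < k < l` with
`π k < π l < π i < π j`. -/
def Contains3412 {n : ℕ} (π : Equiv.Perm (Fin n)) : Prop :=
  ∃ i j k l : Fin n, i < j ∧ j < k ∧ k < l ∧ π k < π l ∧ π l < π i ∧ π i < π j

/-!
A triangle of `invGraph π` is an occurrence of `321`, and an occurrence `i < j < k < l` of `3412`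
gives the 4-cycle `i – k – j – l`. Conversely, in a `321`-avoiding permutation no vertex has
neighbours on both sides of it, and a graph is a forest as soon as every finite vertex set `s`
contains a vertex with at most one neighbour in `s`. If some `s` had none, take among the vertices
of `s` with a smaller neighbour in `s` the one, `b`, with least value `π b`: its two neighbours
`a₁ < a₂` lie below it, a second neighbour `c` of `a₁` lies above `a₁` so that `π b < π c` by
minimality, and then `a₁ a₂ b c` is an occurrence of `3412`.
-/

namespace SimpleGraph

variable {V : Type*} {G : SimpleGraph V}

theorem IsAcyclic.eq_of_adj_of_adj (hG : G.IsAcyclic) {u v w w' : V} (huv : u ≠ v)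
    (huw : G.Adj u w) (hwv : G.Adj w v) (huw' : G.Adj u w') (hw'v : G.Adj w' v) : w = w' := by
  have hpath {x : V} (hux : G.Adj u x) (hxv : G.Adj x v) :
      (Walk.cons hux (Walk.cons hxv Walk.nil)).IsPath := by
    simp [Walk.cons_isPath_iff, hux.ne, hxv.ne, huv]
  have := congrArg (fun p : G.Path u v ↦ p.1.snd)
    ((hG.subsingleton_path u v).elim ⟨_, hpath huw hwv⟩ ⟨_, hpath huw' hw'v⟩)
  simpa using this

theorem isAcyclic_of_forall_finset_exists_leaf
    (h : ∀ s : Finset V, s.Nonempty → ∃ x ∈ s, (G.neighborSet x ∩ s).Subsingleton) :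
    G.IsAcyclic := by
  classical
  intro v p hp
  obtain ⟨x, hx, hleaf⟩ := h p.support.toFinset ⟨v, by simp⟩
  rw [List.mem_toFinset] at hx
  obtain ⟨y, z, hyz, hyz_eq⟩ := Set.ncard_eq_two.1 (hp.ncard_neighborSet_toSubgraph_eq_two hx)
  have hsub : p.toSubgraph.neighborSet x ⊆ G.neighborSet x ∩ p.support.toFinset := by
    intro w hw
    have hw_mem : w ∈ p.toSubgraph.verts := (show p.toSubgraph.Adj x w from hw).snd_mem
    rw [Walk.verts_toSubgraph] at hw_mem
    exact ⟨Subgraph.Adj.adj_sub hw, by simpa using hw_mem⟩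
  rw [hyz_eq] at hsub
  exact hyz (hleaf (hsub (by simp)) (hsub (by simp)))

end SimpleGraph

section InversionGraph

variable {n : ℕ} {π : Equiv.Perm (Fin n)} {i j k : Fin n}

theorem invGraph_adj_iff_of_lt (hij : i < j) : (invGraph π).Adj i j ↔ π j < π i := by
  simp [invGraph, SimpleGraph.fromRel_adj, hij, hij.ne, hij.not_gt]

theorem lt_of_not_invGraph_adj (hij : i < j) (h : ¬(invGraph π).Adj i j) : π i < π j :=
  (not_lt.1 (mt (invGraph_adj_iff_of_lt hij).2 h)).lt_of_ne (π.injective.ne hij.ne)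

theorem not_isAcyclic_of_contains321 (h : Contains321 π) : ¬(invGraph π).IsAcyclic := by
  obtain ⟨i, j, k, hij, hjk, hkj, hji⟩ := h
  intro hG
  refine hG.cliqueFree le_rfl {i, j, k} (SimpleGraph.is3Clique_triple_iff.2 ⟨?_, ?_, ?_⟩)
  · exact (invGraph_adj_iff_of_lt hij).2 hji
  · exact (invGraph_adj_iff_of_lt (hij.trans hjk)).2 (hkj.trans hji)
  · exact (invGraph_adj_iff_of_lt hjk).2 hkj

theorem not_isAcyclic_of_contains3412 (h : Contains3412 π) : ¬(invGraph π).IsAcyclic := by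
  obtain ⟨i, j, k, l, hij, hjk, hkl, hkl', hli, hij'⟩ := h
  intro hG
  refine hkl.ne (hG.eq_of_adj_of_adj hij.ne ?_ ?_ ?_ ?_)
  · exact (invGraph_adj_iff_of_lt (hij.trans hjk)).2 (hkl'.trans hli)
  · exact ((invGraph_adj_iff_of_lt hjk).2 ((hkl'.trans hli).trans hij')).symm
  · exact (invGraph_adj_iff_of_lt ((hij.trans hjk).trans hkl)).2 hli
  · exact ((invGraph_adj_iff_of_lt (hjk.trans hkl)).2 (hli.trans hij')).symm

theorem not_lt_of_invGraph_adj_of_adj (h321 : ¬Contains321 π) (hij : (invGraph π).Adj i j)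
    (hjk : (invGraph π).Adj j k) (hij' : i < j) : ¬j < k := fun hjk' ↦
  h321 ⟨i, j, k, hij', hjk', (invGraph_adj_iff_of_lt hjk').1 hjk,
    (invGraph_adj_iff_of_lt hij').1 hij⟩

theorem contains3412_of_invGraph_adj (h321 : ¬Contains321 π) {a₁ a₂ b c : Fin n}
    (h₁₂ : a₁ < a₂) (h₂b : a₂ < b) (h₁c : a₁ < c) (ha₂b : (invGraph π).Adj a₂ b)
    (ha₁c : (invGraph π).Adj a₁ c) (hπbc : π b < π c) :
    Contains3412 π := by
  have hπ₁₂ : π a₁ < π a₂ := lt_of_not_invGraph_adj h₁₂ fun h ↦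
    not_lt_of_invGraph_adj_of_adj h321 h ha₂b h₁₂ h₂b
  have hbc : b < c := by
    by_contra! hcb
    have hcb' : c < b := hcb.lt_of_ne (by rintro rfl; exact hπbc.false)
    exact not_lt_of_invGraph_adj_of_adj h321 ha₁c ((invGraph_adj_iff_of_lt hcb').2 hπbc) h₁c
      hcb'
  exact ⟨a₁, a₂, b, c, h₁₂, h₂b, hbc, hπbc, (invGraph_adj_iff_of_lt h₁c).1 ha₁c, hπ₁₂⟩

theorem exists_invGraph_leaf (h321 : ¬Contains321 π) (h3412 : ¬Contains3412 π)
    (s : Finset (Fin n)) (hs : s.Nonempty) :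
    ∃ x ∈ s, ((invGraph π).neighborSet x ∩ s).Subsingleton := by
  classical
  by_contra! h
  set G := invGraph π
  set t := s.filter fun w ↦ ∃ u ∈ s, u < w ∧ G.Adj u w
  have ht : t.Nonempty := by
    obtain ⟨m, hm, hmax⟩ := s.exists_max_image id hs
    obtain ⟨u, ⟨hmu : G.Adj m u, hu⟩, -⟩ := (h m hm).exists_ne m
    exact ⟨m, by simpa [t] using ⟨hm, u, hu, (hmax u hu).lt_of_ne hmu.ne', hmu.symm⟩⟩
  obtain ⟨b, hbt, hbmin⟩ := t.exists_min_image π ht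
  obtain ⟨hb, u, -, hub, hub'⟩ := by simpa [t] using hbt
  have below {w : Fin n} (hw : G.Adj b w) : w < b :=
    (not_lt.1 (not_lt_of_invGraph_adj_of_adj h321 hub' hw hub)).lt_of_ne hw.ne'
  obtain ⟨a₁, ⟨hba₁ : G.Adj b a₁, ha₁⟩, a₂, ⟨hba₂ : G.Adj b a₂, -⟩, h₁₂⟩ :=
    (h b hb).exists_lt
  obtain ⟨c, ⟨ha₁c : G.Adj a₁ c, hc⟩, hcb⟩ := (h a₁ ha₁).exists_ne b
  have h₁c : a₁ < c := (not_lt.1 fun hca₁ ↦ not_lt_of_invGraph_adj_of_adj h321 ha₁c.symm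
    hba₁.symm hca₁ (below hba₁)).lt_of_ne ha₁c.ne
  have hct : c ∈ t := by simpa [t] using ⟨hc, a₁, ha₁, h₁c, ha₁c⟩
  have hπbc : π b < π c := (hbmin c hct).lt_of_ne (π.injective.ne hcb.symm)
  exact h3412 (contains3412_of_invGraph_adj h321 h₁₂ (below hba₂) h₁c hba₂.symm ha₁c hπbc)

end InversionGraph

/-- A permutation avoids `321` and `3412` iff its inversion graph is a forest. -/
theorem avoids_321_3412_iff_invGraph_acyclic {n : ℕ} (π : Equiv.Perm (Fin n)) :
    (¬ Contains321 π ∧ ¬ Contains3412 π) ↔ (invGraph π).IsAcyclic :=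
  ⟨fun ⟨h321, h3412⟩ ↦ SimpleGraph.isAcyclic_of_forall_finset_exists_leaf
      (exists_invGraph_leaf h321 h3412),
    fun hG ↦ ⟨fun h ↦ not_isAcyclic_of_contains321 h hG,
      fun h ↦ not_isAcyclic_of_contains3412 h hG⟩⟩
end
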